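/- arXiv:1711.07053 — 12 statements merged into one kernel-verified Lean document; each statement's English description precedes it below -/
import Mathlib

section
/- For every limit ordinal γ and every λ with 1 ≤ λ ≤ ω, there is a partition {A_k : k < λ} of γ into λ pieces such that each piece A_k, with the order inherited from γ, has order type γ. -/
/-!
A limit ordinal is `γ = ω * δ`, and `α ↦ (α / ω, α % ω)` identifies `Iio γ` with the
lexicographic product `Iio δ ×ₗ ℕ`. Split `ℕ` into infinite sets `N k`, one for each `k : ι`, and
let `A k` consist of the `α` with `α % ω ∈ N k`. Then `A k ≃o Iio δ ×ₗ N k ≃o Iio δ ×ₗ ℕ ≃o Iio γ`,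
because every infinite subset of `ℕ` has order type `ω`.
-/

open Set Ordinal

namespace Ordinal

theorem mul_add_lt_mul {a b q r : Ordinal} (hq : q < b) (hr : r < a) : a * q + r < a * b :=
  calc a * q + r < a * q + a := (add_lt_add_iff_left _).2 hr
    _ = a * Order.succ q := (mul_succ a q).symm
    _ ≤ a * b := by gcongr; exact Order.succ_le_of_lt hq

noncomputable def prodLexIioOrderIsoIioMul (a b : Ordinal) : Iio b ×ₗ Iio a ≃o Iio (a * b) :=
  StrictMono.orderIsoOfSurjective
    (fun p => ⟨a * (ofLex p).1 + (ofLex p).2, mul_add_lt_mul (ofLex p).1.2 (ofLex p).2.2⟩)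
    (by
      rintro ⟨⟨q, _⟩, r, hr⟩ ⟨⟨q', _⟩, r', _⟩ h
      rcases Prod.Lex.lt_iff.1 h with hlt | ⟨heq, hlt⟩
      · exact (mul_add_lt_mul (b := q') hlt hr).trans_le le_self_add
      · cases heq
        exact (add_lt_add_iff_left (a * q)).2 (Subtype.coe_lt_coe.2 hlt))
    (by
      rintro ⟨x, hx⟩
      have ha : a ≠ 0 := by rintro rfl; simp at hx
      exact ⟨toLex (⟨x / a, (lt_mul_iff_div_lt ha).1 hx⟩, ⟨x % a, mod_lt x ha⟩),
        Subtype.ext (div_add_mod x a)⟩)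

noncomputable def natOrderIsoIioOmega0 : ℕ ≃o Iio ω :=
  StrictMono.orderIsoOfSurjective (fun n => ⟨n, natCast_lt_omega0 n⟩)
    (fun _ _ h => Subtype.mk_lt_mk.2 (Nat.cast_lt.2 h))
    (fun x => let ⟨n, hn⟩ := lt_omega0.1 x.2; ⟨n, Subtype.ext hn.symm⟩)

end Ordinal

theorem exists_forall_infinite_preimage_singleton (ι : Type*) [Nonempty ι] [Countable ι] :
    ∃ g : ℕ → ι, ∀ k, (g ⁻¹' {k}).Infinite := by
  obtain ⟨s, hs⟩ := exists_surjective_nat ι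
  refine ⟨fun n => s n.unpair.1, fun k => ?_⟩
  obtain ⟨m, rfl⟩ := hs k
  exact infinite_of_injective_forall_mem (f := Nat.pair m) (fun _ _ h => (Nat.pair_eq_pair.1 h).2)
    (by simp)

theorem Prod.Lex.nonempty_orderIso_setOf_snd_mem {X : Type*} [LinearOrder X] {s : Set ℕ}
    (hs : s.Infinite) : Nonempty ({p : X ×ₗ ℕ | (ofLex p).2 ∈ s} ≃o X ×ₗ ℕ) := by
  let f : X ×ₗ ℕ → X ×ₗ ℕ := fun p => toLex ((ofLex p).1, Nat.nth (· ∈ s) (ofLex p).2)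
  have hf : StrictMono f := by
    intro p q h
    rcases Prod.Lex.lt_iff.1 h with hlt | ⟨heq, hlt⟩
    · exact Prod.Lex.lt_iff.2 (Or.inl hlt)
    · exact Prod.Lex.lt_iff.2 (Or.inr ⟨heq, Nat.nth_strictMono hs hlt⟩)
  have hrange : range f = {p | (ofLex p).2 ∈ s} := by
    ext p
    constructor
    · rintro ⟨q, rfl⟩
      exact Nat.nth_mem_of_infinite hs _
    · intro hp
      obtain ⟨n, hn⟩ : (ofLex p).2 ∈ range (Nat.nth (· ∈ s)) :=
        (Nat.range_nth_of_infinite hs).symm ▸ hp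
      exact ⟨toLex ((ofLex p).1, n), by simp [f, hn]⟩
  exact ⟨(OrderIso.setCongr _ _ hrange.symm).trans (hf.orderIso f).symm⟩

def OrderIso.restrictPreimage {α β : Type*} [LE α] [LE β] (e : α ≃o β) (s : Set β) :
    e ⁻¹' s ≃o s where
  toEquiv := e.toEquiv.subtypeEquiv fun _ => Iff.rfl
  map_rel_iff' := e.le_iff_le

/-- For every limit ordinal γ and every λ with 1 ≤ λ ≤ ω (here: every nonempty
countable index type ι), there is a partition {A_k : k ∈ ι} of γ (viewed as the linearly
ordered set of ordinals below γ) into pairwise disjoint pieces whose union is everything,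
such that each piece, with the inherited order, has order type γ. -/
theorem stmt0 (γ : Ordinal) (hγ : Order.IsSuccLimit γ) (ι : Type) [Nonempty ι] [Countable ι] :
    ∃ A : ι → Set (Set.Iio γ),
      Pairwise (Function.onFun Disjoint A) ∧
      (⋃ k, A k) = Set.univ ∧
      ∀ k, Nonempty (↥(A k) ≃o ↥(Set.Iio γ)) := by
  obtain ⟨δ, rfl⟩ : ω ∣ γ := isSuccPrelimit_iff_omega0_dvd.1 hγ.isSuccPrelimit
  let e : Iio (ω * δ) ≃o Iio δ ×ₗ ℕ := (prodLexIioOrderIsoIioMul ω δ).symm.trans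
    (Prod.Lex.prodLexCongr (OrderIso.refl _) natOrderIsoIioOmega0.symm)
  obtain ⟨g, hg⟩ := exists_forall_infinite_preimage_singleton ι
  let colour : Iio (ω * δ) → ι := fun α => g (ofLex (e α)).2
  refine ⟨fun k => colour ⁻¹' {k}, fun k l hkl => (disjoint_singleton.2 hkl).preimage colour,
    iUnion_eq_univ_iff.2 fun α => ⟨colour α, rfl⟩, fun k => ?_⟩
  obtain ⟨f⟩ := Prod.Lex.nonempty_orderIso_setOf_snd_mem (X := Iio δ) (hg k)
  exact ⟨((e.restrictPreimage _).trans f).trans e.symm⟩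
end

section
/- For every limit ordinal γ and every ordinal α ≤ γ, there is a partition {A, B} of γ into two sets such that A has order type α and B has order type γ (with the orders induced from γ). -/
/-!
Every ordinal is `x = ω * (x / ω) + n` with `n` finite. Replacing `n` by `2n`, resp. `2n + 1`,
gives two strictly monotone maps of `γ` into itself (as `γ` is a multiple of `ω`) with
disjoint images, the "even" and "odd" ordinals. Take `A` to be the odd image of `α` and `B` the
rest of `γ`: then `B` contains the even image of `γ`, so `γ` and `B` embed into each other,
and mutually embeddable well orders are isomorphic.
-/

open Ordinal Order Set

theorem nonempty_orderIso_of_orderEmbedding_of_orderEmbedding {α β : Type*}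
    [LinearOrder α] [WellFoundedLT α] [LinearOrder β] [WellFoundedLT β]
    (f : α ↪o β) (g : β ↪o α) : Nonempty (α ≃o β) :=
  ⟨.ofRelIsoLT (f.ltEmbedding.collapse.antisymm g.ltEmbedding.collapse)⟩

theorem Ordinal.mul_add_lt_mul_of_lt {b q q' r : Ordinal} (hr : r < b) (hq : q < q') :
    b * q + r < b * q' :=
  calc b * q + r < b * q + b := add_lt_add_right hr _
    _ = b * succ q := (mul_succ b q).symm
    _ ≤ b * q' := mul_le_mul_right (succ_le_of_lt hq) b

noncomputable def mapModOmega (f : Ordinal → Ordinal) (x : Ordinal) : Ordinal :=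
  ω * (x / ω) + f (x % ω)

section mapModOmega

variable {f : Ordinal → Ordinal}

theorem mapModOmega_strictMono (hf : StrictMono f) (hfω : ∀ r < ω, f r < ω) :
    StrictMono (mapModOmega f) := by
  intro x y hxy
  rcases (div_le_left hxy.le ω).lt_or_eq with hdiv | hdiv
  · exact (mul_add_lt_mul_of_lt (hfω _ (mod_lt x omega0_ne_zero)) hdiv).trans_le le_self_add
  · have hmod : x % ω < y % ω := by
      rwa [← div_add_mod x ω, ← div_add_mod y ω, hdiv, add_lt_add_iff_left] at hxy
    simpa only [mapModOmega, hdiv] using add_lt_add_right (hf hmod) _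

theorem mapModOmega_lt {γ x : Ordinal} (hγ : IsSuccPrelimit γ) (hfω : ∀ r < ω, f r < ω)
    (hx : x < γ) : mapModOmega f x < γ := by
  obtain ⟨δ, rfl⟩ := isSuccPrelimit_iff_omega0_dvd.1 hγ
  exact mul_add_lt_mul_of_lt (hfω _ (mod_lt x omega0_ne_zero))
    ((lt_mul_iff_div_lt omega0_ne_zero).1 hx)

theorem mapModOmega_mod (hfω : ∀ r < ω, f r < ω) (x : Ordinal) :
    mapModOmega f x % ω = f (x % ω) := by
  rw [mapModOmega, mul_add_mod_self, mod_eq_of_lt (hfω _ (mod_lt x omega0_ne_zero))]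

end mapModOmega

theorem two_mul_lt_omega0 {r : Ordinal} (hr : r < ω) : 2 * r < ω :=
  isPrincipal_mul_omega0 (natCast_lt_omega0 2) hr

theorem two_mul_add_one_lt_omega0 {r : Ordinal} (hr : r < ω) : 2 * r + 1 < ω :=
  isSuccLimit_omega0.isSuccPrelimit.add_one_lt (two_mul_lt_omega0 hr)

theorem strictMono_two_mul : StrictMono fun r : Ordinal => 2 * r :=
  fun _ _ h => (mul_lt_mul_iff_of_pos_left zero_lt_two).2 h

theorem strictMono_two_mul_add_one : StrictMono fun r : Ordinal => 2 * r + 1 :=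
  fun _ _ h => (add_one_le_iff.2 (strictMono_two_mul h)).trans_lt (lt_add_one _)

theorem two_mul_ne_two_mul_add_one {a b : Ordinal} (ha : a < ω) (hb : b < ω) :
    2 * a ≠ 2 * b + 1 := by
  obtain ⟨m, rfl⟩ := lt_omega0.1 ha
  obtain ⟨n, rfl⟩ := lt_omega0.1 hb
  exact_mod_cast (by omega : 2 * m ≠ 2 * n + 1)

theorem mapModOmega_two_mul_ne (x z : Ordinal) :
    mapModOmega (2 * ·) x ≠ mapModOmega (2 * · + 1) z := fun h => by
  have hmod := congrArg (· % ω) h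
  simp only [mapModOmega_mod (fun _ => two_mul_lt_omega0),
    mapModOmega_mod (fun _ => two_mul_add_one_lt_omega0)] at hmod
  exact two_mul_ne_two_mul_add_one (mod_lt x omega0_ne_zero) (mod_lt z omega0_ne_zero) hmod

/-- For every limit ordinal γ and every ordinal α ≤ γ, there is a partition
{A, B} of the set of ordinals below γ such that A has order type α and B has order type γ
(with the orders induced from γ). -/
theorem stmt2 (γ α : Ordinal) (hγ : Order.IsSuccLimit γ) (hα : α ≤ γ) :
    ∃ A B : Set Ordinal, A ⊆ Set.Iio γ ∧ B ⊆ Set.Iio γ ∧ Disjoint A B ∧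
      A ∪ B = Set.Iio γ ∧
      Nonempty (↥A ≃o ↥(Set.Iio α)) ∧ Nonempty (↥B ≃o ↥(Set.Iio γ)) := by
  set A := mapModOmega (2 * · + 1) '' Iio α
  have hA : A ⊆ Iio γ := image_subset_iff.2 fun x hx =>
    mapModOmega_lt hγ.isSuccPrelimit (fun _ => two_mul_add_one_lt_omega0) (lt_of_lt_of_le hx hα)
  refine ⟨A, Iio γ \ A, hA, sdiff_subset, disjoint_sdiff_right, union_sdiff_cancel hA, ?_, ?_⟩
  · exact ⟨((mapModOmega_strictMono strictMono_two_mul_add_one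
      fun _ => two_mul_add_one_lt_omega0).strictMonoOn _ |>.orderIso _ _).symm⟩
  · refine nonempty_orderIso_of_orderEmbedding_of_orderEmbedding
      (.ofStrictMono (inclusion sdiff_subset) fun _ _ h => h)
      (.ofStrictMono (fun x => ⟨mapModOmega (2 * ·) x, ?_, ?_⟩) fun _ _ h =>
        mapModOmega_strictMono strictMono_two_mul (fun _ => two_mul_lt_omega0) h)
    · exact mapModOmega_lt hγ.isSuccPrelimit (fun _ => two_mul_lt_omega0) x.2
    · rintro ⟨z, -, hz⟩
      exact mapModOmega_two_mul_ne x z hz.symm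
end

section
/- Let ⟨n_i : i ∈ I⟩ be a sequence of positive natural numbers such that for infinitely many i the value n_i is equal to some fixed m with {i : n_i = m} infinite. If the sequence ⟨n_i : i ∈ I⟩ is reversible, then it is not the case that some value is attained infinitely often and equals a sum of other infinitely-attained values; more precisely: if ⟨n_i : i ∈ I⟩ is reversible then the set K = {m : |{i : n_i = m}| ≥ ω} is independent. -/
/-- A sequence of (positive) natural numbers is reversible iff there is no non-injective
surjection f : I → I such that for all j, the sum of n_i over the fiber f⁻¹[{j}] equals n_j. -/
def RevSeqNat {I : Type*} (n : I → ℕ) : Prop :=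
  ¬ ∃ f : I → I, Function.Surjective f ∧ ¬ Function.Injective f ∧
      ∀ j, ∑ᶠ i ∈ f ⁻¹' {j}, n i = n j

/-- A set K of naturals is independent iff no element of K belongs to the additive
subsemigroup generated by the other elements of K. -/
def IndepSet (K : Set ℕ) : Prop :=
  ∀ m ∈ K, m ∉ AddSubsemigroup.closure (K \ {m})

/-!
Suppose `a = v₁ + ⋯ + v_t` with `t ≥ 2`, where `a` and every `v_s` are attained infinitely often.
Choose pairwise distinct indices carrying an infinite column of copies of `a` and, for each `s`, an
infinite column of copies of `v_s`. Shifting every column down by one step, merging the bottom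
copies of the `v_s` into the bottom copy of `a`, and fixing every other index, gives a surjective,
non-injective map that preserves fibre sums, so the sequence is not reversible.
-/

open Function

theorem AddSubsemigroup.exists_fin_sum_eq_of_mem_closure {M : Type*} [AddCommMonoid M]
    {S : Set M} {x : M} (hx : x ∈ closure S) :
    ∃ t, 0 < t ∧ ∃ v : Fin t → M, (∀ s, v s ∈ S) ∧ ∑ s, v s = x := by
  induction hx using closure_induction with
  | mem y hy => exact ⟨1, one_pos, fun _ => y, fun _ => hy, by simp⟩
  | add _ _ _ _ iha ihb =>
    obtain ⟨t, ht, v, hvS, rfl⟩ := iha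
    obtain ⟨t', -, v', hvS', rfl⟩ := ihb
    refine ⟨t + t', by omega, Fin.append v v', Fin.addCases (by simpa) (by simpa), ?_⟩
    simp [Fin.sum_univ_add]

theorem exists_injective_comp_eq_of_infinite_fibers {I β γ : Type*} [Countable β]
    (n : I → γ) (c : β → γ) (hc : ∀ b, {i | n i = c b}.Infinite) :
    ∃ e : β → I, Injective e ∧ n ∘ e = c := by
  obtain ⟨k, hk⟩ := Countable.exists_injective_nat β
  have hfib (y : Set.range c) : ∃ g : ℕ → I, Injective g ∧ ∀ p, n (g p) = y := by
    obtain ⟨_, b, rfl⟩ := y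
    let φ := Set.Infinite.natEmbedding _ (hc b)
    exact ⟨fun p => φ p, Subtype.val_injective.comp φ.injective, fun p => (φ p).2⟩
  choose g hg_inj hg_n using hfib
  refine ⟨fun b => g ⟨c b, b, rfl⟩ (k b), fun b b' h => hk ?_, funext fun b => hg_n _ _⟩
  have hy : (⟨c b, b, rfl⟩ : Set.range c) = ⟨c b', b', rfl⟩ :=
    Subtype.ext (by simpa [hg_n] using congrArg n h)
  dsimp only at h
  rw [hy] at h
  exact hg_inj _ h

theorem RevSeqNat.comp {I J : Type*} {n : I → ℕ} (hn : RevSeqNat n) {e : J → I}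
    (he : Injective e) : RevSeqNat (n ∘ e) := by
  rintro ⟨g, hg_surj, hg_not_inj, hg_fiber⟩
  set f : I → I := extend e (e ∘ g) id
  have hf_e (a : J) : f (e a) = e (g a) := he.extend_apply _ _ a
  have hf_out {i : I} (hi : i ∉ Set.range e) : f i = i := extend_apply' _ _ _ hi
  refine hn ⟨f, fun i => ?_, fun hf_inj => hg_not_inj fun a a' h => ?_, fun i => ?_⟩
  · by_cases hi : i ∈ Set.range e
    · obtain ⟨a, rfl⟩ := hi
      obtain ⟨a', rfl⟩ := hg_surj a
      exact ⟨e a', hf_e a'⟩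
    · exact ⟨i, hf_out hi⟩
  · exact he (hf_inj (by rw [hf_e, hf_e, h]))
  · by_cases hi : i ∈ Set.range e
    · obtain ⟨a, rfl⟩ := hi
      have hfib : f ⁻¹' {e a} = e '' (g ⁻¹' {a}) := by
        ext i
        by_cases hi : i ∈ Set.range e
        · obtain ⟨b, rfl⟩ := hi
          simp [hf_e, he.eq_iff]
        · simp only [Set.mem_preimage, Set.mem_singleton_iff, hf_out hi, Set.mem_image]
          exact ⟨fun h => absurd ⟨a, h.symm⟩ hi, fun ⟨b, _, hb⟩ => absurd ⟨b, hb⟩ hi⟩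
      rw [hfib, finsum_mem_image he.injOn]
      exact hg_fiber a
    · have hfib : f ⁻¹' {i} = {i} := by
        ext j
        by_cases hj : j ∈ Set.range e
        · obtain ⟨b, rfl⟩ := hj
          simp only [Set.mem_preimage, Set.mem_singleton_iff, hf_e]
          exact ⟨fun h => absurd ⟨_, h⟩ hi, fun h => absurd ⟨b, h⟩ hi⟩
        · simp [hf_out hj]
      rw [hfib, finsum_mem_singleton]

/-- Row `p` of the grid holds a total `inl p` and its parts `inr (p, s)`. -/
def mergeShift {ι : Type*} : ℕ ⊕ (ℕ × ι) → ℕ ⊕ (ℕ × ι)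
  | .inl p => .inl (p + 1)
  | .inr (0, _) => .inl 0
  | .inr (p + 1, s) => .inr (p, s)

section mergeShift

variable {ι : Type*}

theorem mergeShift_preimage_inl_zero :
    mergeShift ⁻¹' {.inl 0} = Set.range fun s : ι => .inr (0, s) := by
  ext (_ | ⟨_ | _, _⟩) <;> simp [mergeShift]

theorem mergeShift_preimage_inl_succ (p : ℕ) :
    mergeShift ⁻¹' {.inl (p + 1)} = {(.inl p : ℕ ⊕ (ℕ × ι))} := by
  ext (_ | ⟨_ | _, _⟩) <;> simp [mergeShift]

theorem mergeShift_preimage_inr (p : ℕ) (s : ι) :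
    mergeShift ⁻¹' {.inr (p, s)} = {(.inr (p + 1, s) : ℕ ⊕ (ℕ × ι))} := by
  ext (_ | ⟨_ | _, _⟩) <;> simp [mergeShift, eq_comm]

theorem not_revSeqNat_mergeShift [Fintype ι] [Nontrivial ι] (v : ι → ℕ) :
    ¬ RevSeqNat (Sum.elim (fun _ : ℕ => ∑ s, v s) (fun ps : ℕ × ι => v ps.2)) := by
  refine not_not.2 ⟨mergeShift, ?_, ?_, ?_⟩
  · rintro ((_ | p) | ⟨p, s⟩)
    exacts [⟨.inr (0, Classical.arbitrary ι), rfl⟩, ⟨.inl p, rfl⟩, ⟨.inr (p + 1, s), rfl⟩]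
  · obtain ⟨s, s', hss'⟩ := exists_pair_ne ι
    exact fun hinj => hss' (by simpa using @hinj (.inr (0, s)) (.inr (0, s')) rfl)
  · rintro ((_ | p) | ⟨p, s⟩)
    · rw [mergeShift_preimage_inl_zero, finsum_mem_range (fun s s' h => by simpa using h),
        finsum_eq_sum_of_fintype]
      rfl
    · rw [mergeShift_preimage_inl_succ, finsum_mem_singleton]
      rfl
    · rw [mergeShift_preimage_inr, finsum_mem_singleton]
      rfl

end mergeShift

theorem stmt5_general {I : Type*} (n : I → ℕ) (m : ℕ) (hrev : RevSeqNat n) :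
    IndepSet {m : ℕ | {i | n i = m}.Infinite} := by
  intro a ha hcl
  obtain ⟨t, ht, v, hvK, rfl⟩ := AddSubsemigroup.exists_fin_sum_eq_of_mem_closure hcl
  have : Nontrivial (Fin t) := by
    refine Fin.nontrivial_iff_two_le.2 (by_contra fun h => ?_)
    obtain rfl : t = 1 := by omega
    exact (hvK 0).2 (by simp)
  obtain ⟨e, he, hne⟩ := exists_injective_comp_eq_of_infinite_fibers n
    (Sum.elim (fun _ : ℕ => ∑ s, v s) (fun ps : ℕ × Fin t => v ps.2))
    (by rintro (_ | ⟨_, s⟩); exacts [ha, (hvK s).1])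
  exact not_revSeqNat_mergeShift v (hne ▸ hrev.comp he)

/-- If ⟨n_i : i ∈ I⟩ is a reversible sequence of positive naturals (where some
value m is attained by infinitely many i), then the set K = {m : {i | n_i = m} is infinite}
is independent. -/
theorem stmt5 {I : Type*} (n : I → ℕ) (hpos : ∀ i, 0 < n i)
    (m : ℕ) (hm : {i | n i = m}.Infinite)
    (hrev : RevSeqNat n) :
    IndepSet {m : ℕ | {i | n i = m}.Infinite} :=
  stmt5_general n m hrev
end

section
/- Let γ be a limit ordinal (or 0) and ⟨n_i : i ∈ I⟩ a sequence of natural numbers with γ + n_i > 0 for all i. The disjoint union poset ⋃_{i∈I} (γ + n_i) is reversible if and only if the set I_γ = {i ∈ I : n_i = 0} is finite and ⟨n_i : i ∈ I \ I_γ⟩ is a reversible sequence of natural numbers. -/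
/-- A poset is reversible iff every bijective homomorphism (monotone bijection) of it to
itself is an automorphism (i.e. its inverse is also monotone). -/
def Reversible (P : Type*) [PartialOrder P] : Prop :=
  ∀ f : P → P, Function.Bijective f → Monotone f → ∀ x y : P, f x ≤ f y → x ≤ y

/-!
Write `γ = ω * δ`, so that `γ + n ≅ (δ ×ₗ ℕ) ⊕ₗ n`: every chain is a copy of the well-order
`δ ×ₗ ℕ`, which has no maximum, followed by a finite tail of length `n`.

A condensation `f` of the disjoint union maps each chain into a chain, giving `g : I → I`.
Left parts cannot land in a finite tail (they contain infinite final segments), and tails cannot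
land in a left part (a strictly monotone self-map of a well-order is inflationary), so `f` maps
the tails bijectively onto the tails and `n j = ∑_{g i = j} n i` over finite fibres: `g` is a
merge of `n`. If `g` is injective, `f` is an automorphism.

Conversely every merge is realised by a condensation: `k` copies of `δ ×ₗ ℕ` are interleaved into
one by `(q, r) ↦ (q, k r + c)`, and the tails are concatenated; a non-injective merge gives a
non-reversible union. Finally, a non-injective merge exists exactly when infinitely many `n i`
vanish (shift an `ω`-sequence of them) or the positive part of `n` is not reversible.
-/

open Function Set

theorem Reversible.of_orderIso {P Q : Type*} [PartialOrder P] [PartialOrder Q] (e : P ≃o Q)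
    (hP : Reversible P) : Reversible Q := by
  intro f hbij hmono x y hle
  have := hP (e.symm ∘ f ∘ e) (e.symm.bijective.comp (hbij.comp e.bijective))
    (e.symm.monotone.comp (hmono.comp e.monotone)) (e.symm x) (e.symm y)
  simpa using this (by simpa using e.symm.monotone hle)

theorem OrderIso.reversible_iff {P Q : Type*} [PartialOrder P] [PartialOrder Q] (e : P ≃o Q) :
    Reversible P ↔ Reversible Q :=
  ⟨.of_orderIso e, .of_orderIso e.symm⟩

namespace Sigma

variable {ι : Type*} {α β : ι → Type*}

theorem fst_eq_of_le [∀ i, LE (α i)] {a b : Σ i, α i} (h : a ≤ b) : a.1 = b.1 := by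
  cases h; rfl

def orderIsoCongrRight [∀ i, LE (α i)] [∀ i, LE (β i)] (e : ∀ i, α i ≃o β i) :
    (Σ i, α i) ≃o Σ i, β i where
  toEquiv := Equiv.sigmaCongrRight fun i => (e i).toEquiv
  map_rel_iff' := by
    rintro ⟨i, a⟩ ⟨j, b⟩
    constructor <;> intro h <;> obtain rfl : i = j := fst_eq_of_le h
    · exact mk_le_mk_iff.2 ((e i).le_iff_le.1 (mk_le_mk_iff.1 h))
    · exact mk_le_mk_iff.2 ((e i).le_iff_le.2 (mk_le_mk_iff.1 h))

end Sigma

section SigmaOfChains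

variable {ι : Type*} {α : ι → Type*} [∀ i, LinearOrder (α i)]

theorem Sigma.le_total_of_fst_eq {p q : Σ i, α i} (h : p.1 = q.1) : p ≤ q ∨ q ≤ p := by
  obtain ⟨i, x⟩ := p
  obtain ⟨j, y⟩ := q
  obtain rfl : i = j := h
  exact (le_total x y).imp Sigma.mk_le_mk_iff.2 Sigma.mk_le_mk_iff.2

theorem Monotone.sigma_fst_eq {κ : Type*} {β : κ → Type*} [∀ j, Preorder (β j)]
    {f : (Σ i, α i) → Σ j, β j} (hf : Monotone f) (i : ι) (a b : α i) :
    (f ⟨i, a⟩).1 = (f ⟨i, b⟩).1 := by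
  rcases le_total a b with h | h
  · exact Sigma.fst_eq_of_le (hf (Sigma.mk_le_mk_iff.2 h))
  · exact (Sigma.fst_eq_of_le (hf (Sigma.mk_le_mk_iff.2 h))).symm

theorem Monotone.le_of_map_le {f : (Σ i, α i) → Σ i, α i} (hf : Monotone f) (hinj : Injective f)
    (hfst : ∀ p q, (f p).1 = (f q).1 → p.1 = q.1) {p q : Σ i, α i} (h : f p ≤ f q) : p ≤ q := by
  obtain ⟨i, a⟩ := p
  obtain ⟨j, b⟩ := q
  obtain rfl : i = j := hfst _ _ (Sigma.fst_eq_of_le h)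
  refine Sigma.mk_le_mk_iff.2 (le_of_not_gt fun hba => ?_)
  exact (hf.strictMono_of_injective hinj (Sigma.mk_lt_mk_iff.2 hba)).not_ge h

theorem not_reversible_sigma_of_fiber_equiv (hne : ∀ i, Nonempty (α i)) {g : ι → ι}
    (hg : ¬Injective g) (φ : ∀ j, (Σ c : {i // g i = j}, α c) ≃ α j) (hφ : ∀ j, Monotone (φ j)) :
    ¬Reversible (Σ i, α i) := by
  let F : (Σ i, α i) ≃ Σ i, α i :=
    ((Equiv.sigmaCongrLeft (Equiv.sigmaFiberEquiv g)).symm.trans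
      (Equiv.sigmaAssoc fun j (c : {i // g i = j}) => α c)).trans (Equiv.sigmaCongrRight φ)
  have hF : ∀ i a, F ⟨i, a⟩ = ⟨g i, φ (g i) ⟨⟨i, rfl⟩, a⟩⟩ := fun i a => rfl
  have hmono : Monotone F := by
    rintro _ _ ⟨i, a, b, h⟩
    rw [hF, hF]
    exact Sigma.mk_le_mk_iff.2 (hφ _ (Sigma.mk_le_mk_iff.2 h))
  obtain ⟨i, i', hgi, hii'⟩ := not_injective_iff.1 hg
  obtain ⟨a⟩ := hne i
  obtain ⟨a'⟩ := hne i'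
  intro hrev
  rcases Sigma.le_total_of_fst_eq (p := F ⟨i, a⟩) (q := F ⟨i', a'⟩) (by simp only [hF, hgi]) with
    h | h
  · exact hii' (Sigma.fst_eq_of_le (hrev F F.bijective hmono _ _ h))
  · exact hii' (Sigma.fst_eq_of_le (hrev F F.bijective hmono _ _ h)).symm

end SigmaOfChains

section Counting

variable {ι : Type*} {α : ι → Type*}

theorem Set.Finite.singleton_sigma {t : ∀ i, Set (α i)} {j : ι} (ht : (t j).Finite) :
    (({j} : Set ι).sigma t).Finite := by
  rw [Set.singleton_sigma]
  exact ht.image _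

variable (T : ∀ i, Set (α i))

theorem natCard_sigma_fiber (hT : ∀ i, (T i).Finite) {g : ι → ι} {j : ι}
    (hfin : (g ⁻¹' {j}).Finite) :
    Nat.card {p : Σ i, α i // g p.1 = j ∧ p.2 ∈ T p.1} = ∑ᶠ i ∈ g ⁻¹' {j}, (T i).ncard := by
  have := hfin.fintype
  have (i : ι) : Finite (T i) := hT i
  let e : {p : Σ i, α i // g p.1 = j ∧ p.2 ∈ T p.1} ≃ Σ c : g ⁻¹' {j}, T c :=
    { toFun p := ⟨⟨p.1.1, p.2.1⟩, ⟨p.1.2, p.2.2⟩⟩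
      invFun q := ⟨⟨q.1.1, q.2.1⟩, q.1.2, q.2.2⟩
      left_inv _ := rfl
      right_inv _ := rfl }
  rw [Nat.card_congr e, Nat.card_sigma, ← finsum_set_coe_eq_finsum_mem, finsum_eq_sum_of_fintype]
  rfl

theorem finsum_ncard_fiber (hT : ∀ i, (T i).Finite) (f : (Σ i, α i) ≃ Σ i, α i) {g : ι → ι}
    (hfst : ∀ p, (f p).1 = g p.1) (hfT : ∀ p, (f p).2 ∈ T (f p).1 ↔ p.2 ∈ T p.1) {j : ι}
    (hfin : (g ⁻¹' {j}).Finite) :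
    ∑ᶠ i ∈ g ⁻¹' {j}, (T i).ncard = (T j).ncard := by
  have hid := natCard_sigma_fiber T hT (g := id) (j := j) (by simp)
  rw [preimage_id, finsum_mem_singleton] at hid
  rw [← hid, ← natCard_sigma_fiber T hT hfin]
  exact Nat.card_congr (f.subtypeEquiv fun p => by rw [hfT, id, hfst])

end Counting

section FiberwiseEquivs

variable {κ : Type*}

theorem exists_monotone_sigma_sumLex_equiv {α β : κ → Type*} {A B : Type*}
    [∀ c, Preorder (α c)] [∀ c, Preorder (β c)] [Preorder A] [Preorder B]
    {φ : (Σ c, α c) ≃ A} (hφ : Monotone φ) {ψ : (Σ c, β c) ≃ B} (hψ : Monotone ψ) :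
    ∃ χ : (Σ c, α c ⊕ₗ β c) ≃ A ⊕ₗ B, Monotone χ := by
  refine ⟨(Equiv.sigmaCongrRight fun c => ofLex).trans <|
    (Equiv.sigmaSumDistrib α β).trans <| (φ.sumCongr ψ).trans toLex, ?_⟩
  rintro _ _ ⟨c, x, y, h⟩
  induction x with | _ x => ?_
  induction y with | _ y => ?_
  rcases x with a | b <;> rcases y with a' | b'
  · exact Sum.Lex.inl_le_inl_iff.2 (hφ (Sigma.mk_le_mk_iff.2 (Sum.Lex.inl_le_inl_iff.1 h)))
  · exact Sum.Lex.inl_le_inr _ _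
  · exact absurd h Sum.Lex.not_inr_le_inl
  · exact Sum.Lex.inr_le_inr_iff.2 (hψ (Sigma.mk_le_mk_iff.2 (Sum.Lex.inr_le_inr_iff.1 h)))

theorem exists_monotone_sigma_fin_equiv [Finite κ] (m : κ → ℕ) {M : ℕ} (hM : ∑ᶠ c, m c = M) :
    ∃ φ : (Σ c, Fin (m c)) ≃ Fin M, Monotone φ := by
  cases nonempty_fintype κ
  let : LinearOrder κ := LinearOrder.lift' _ (Fintype.equivFin κ).injective
  have hcard : Fintype.card (Σₗ c, Fin (m c)) = M := by
    simp [← hM, finsum_eq_sum_of_fintype]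
  refine ⟨toLex.trans (Fintype.orderIsoFinOfCardEq _ hcard).symm.toEquiv, ?_⟩
  rintro _ _ ⟨c, s, t, h⟩
  exact OrderIso.monotone _ (Sigma.Lex.right _ _ h)

theorem exists_monotone_sigma_prodLex_nat_equiv [Finite κ] [Nonempty κ] (Q : Type*) [Preorder Q] :
    ∃ φ : (Σ _ : κ, Q ×ₗ ℕ) ≃ Q ×ₗ ℕ, Monotone φ := by
  obtain ⟨k, ⟨e⟩⟩ := Finite.exists_equiv_fin κ
  have : NeZero k := ⟨fun hk => by subst hk; exact (e (Classical.arbitrary κ)).elim0⟩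
  let φ : (Σ _ : κ, Q ×ₗ ℕ) ≃ Q ×ₗ ℕ :=
    (Equiv.sigmaEquivProd κ _).trans <| (Equiv.prodCongr e ofLex).trans <|
      (Equiv.prodComm _ _).trans <| (Equiv.prodAssoc _ _ _).trans <|
      (Equiv.prodCongr (.refl Q) (Nat.divModEquiv k).symm).trans toLex
  have hφ : ∀ c x, φ ⟨c, x⟩ = toLex ((ofLex x).1, (ofLex x).2 * k + e c) := fun _ _ => rfl
  refine ⟨φ, ?_⟩
  rintro _ _ ⟨c, x, y, h⟩
  rw [hφ, hφ, Prod.Lex.toLex_le_toLex]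
  exact (Prod.Lex.le_iff.1 h).imp_right
    fun ⟨hq, hr⟩ => ⟨hq, Nat.add_le_add_right (Nat.mul_le_mul_right _ hr) _⟩

end FiberwiseEquivs

section MergeOfWeights

variable {I : Type*} {n : I → ℕ} {g : I → I}

/-- Unlike in `RevSeqNat`, fibres must be finite: `finsum` is `0` on an infinite support. -/
structure IsMerge (n : I → ℕ) (g : I → I) : Prop where
  surjective : Surjective g
  finite_fiber : ∀ j, (g ⁻¹' {j}).Finite
  finsum_fiber : ∀ j, ∑ᶠ i ∈ g ⁻¹' {j}, n i = n j

namespace IsMerge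

theorem le_apply (hg : IsMerge n g) (i : I) : n i ≤ n (g i) := by
  classical
  rw [← hg.finsum_fiber (g i), finsum_mem_eq_finite_toFinset_sum _ (hg.finite_fiber _)]
  exact Finset.single_le_sum (fun _ _ => Nat.zero_le _) (by simp)

theorem injective (hZ : {i | n i = 0}.Finite) (hrev : RevSeqNat (fun i : {i // n i ≠ 0} => n i))
    (hg : IsMerge n g) : Injective g := by
  -- `g` sends the positive part into itself, where `hrev` applies; and `g⁻¹' Z ⊆ Z` for the finite
  -- set `Z` of zeros, so the surjection `g` permutes `Z`
  have hJ : ∀ i, n i ≠ 0 → n (g i) ≠ 0 := fun i hi =>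
    ((Nat.pos_of_ne_zero hi).trans_le (hg.le_apply i)).ne'
  set h : {i // n i ≠ 0} → {i // n i ≠ 0} := Subtype.map g hJ
  have hinj : Injective h := by
    by_contra hninj
    refine hrev ⟨h, fun j => ?_, hninj, fun j => ?_⟩
    · obtain ⟨i, hi, hni⟩ := exists_ne_zero_of_finsum_mem_ne_zero (hg.finsum_fiber j ▸ j.2)
      exact ⟨⟨i, hni⟩, Subtype.ext hi⟩
    · have himage : Subtype.val '' (h ⁻¹' {j}) = g ⁻¹' {j.1} ∩ support n := by
        ext i
        simp [h, Subtype.ext_iff, and_comm]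
      rw [← finsum_mem_image (f := n) Subtype.val_injective.injOn, himage,
        finsum_mem_inter_support, hg.finsum_fiber]
  have hZ' : ∀ i, n (g i) = 0 → n i = 0 := fun i => not_imp_not.1 (hJ i)
  have hsub : {i | n i = 0} ⊆ g '' {i | n i = 0} := fun j hj =>
    let ⟨i, hi⟩ := hg.surjective j
    ⟨i, hZ' i (hi ▸ hj), hi⟩
  have himage : g '' {i | n i = 0} = {i | n i = 0} :=
    (eq_of_subset_of_ncard_le hsub (ncard_image_le hZ) (hZ.image g)).symm
  have hinjOn : InjOn g {i | n i = 0} := injOn_of_ncard_image_eq (by rw [himage]) hZ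
  intro u v huv
  by_cases hu : n u = 0
  · have hv : n v = 0 := hZ' v (huv ▸ himage.subset ⟨u, hu, rfl⟩)
    exact hinjOn hu hv huv
  · have hv : n v ≠ 0 := fun hv => hu (hZ' u (huv ▸ himage.subset ⟨v, hv, rfl⟩))
    exact congrArg Subtype.val (hinj (Subtype.ext huv : h ⟨u, hu⟩ = h ⟨v, hv⟩))

end IsMerge

theorem exists_isMerge_not_injective_of_embedding {J : Type*} {e : J → I} (he : Injective e)
    {h : J → J} (hh : IsMerge (n ∘ e) h) (hninj : ¬Injective h) :
    ∃ g, IsMerge n g ∧ ¬Injective g := by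
  set g := extend e (e ∘ h) id
  have hg : ∀ k, g (e k) = e (h k) := he.extend_apply _ _
  have hg' : ∀ i ∉ range e, g i = i := fun i hi => extend_apply' _ _ _ (by simpa using hi)
  have hfib : ∀ k, g ⁻¹' {e k} = e '' (h ⁻¹' {k}) := by
    intro k
    ext i
    by_cases hi : i ∈ range e
    · obtain ⟨l, rfl⟩ := hi
      simp [hg, he.eq_iff]
    · simp only [mem_preimage, mem_singleton_iff, hg' i hi, mem_image]
      exact ⟨fun hik => absurd ⟨k, hik.symm⟩ hi, fun ⟨l, _, hl⟩ => absurd ⟨l, hl⟩ hi⟩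
  have hfib_of_notMem : ∀ i ∉ range e, g ⁻¹' {i} = {i} := by
    intro i hi
    ext i'
    by_cases hi' : i' ∈ range e
    · obtain ⟨l, rfl⟩ := hi'
      simp only [mem_preimage, mem_singleton_iff, hg]
      exact ⟨fun h' => absurd ⟨_, h'⟩ hi, fun h' => absurd ⟨l, h'⟩ hi⟩
    · simp [hg' i' hi']
  refine ⟨g, ⟨fun i => ?_, fun i => ?_, fun i => ?_⟩, fun hginj => hninj fun k l hkl => ?_⟩
  · by_cases hi : i ∈ range e
    · obtain ⟨k, rfl⟩ := hi
      obtain ⟨l, rfl⟩ := hh.surjective k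
      exact ⟨e l, hg l⟩
    · exact ⟨i, hg' i hi⟩
  · by_cases hi : i ∈ range e
    · obtain ⟨k, rfl⟩ := hi
      exact hfib k ▸ (hh.finite_fiber k).image e
    · rw [hfib_of_notMem i hi]
      exact finite_singleton i
  · by_cases hi : i ∈ range e
    · obtain ⟨k, rfl⟩ := hi
      rw [hfib, finsum_mem_image he.injOn]
      exact hh.finsum_fiber k
    · rw [hfib_of_notMem i hi, finsum_mem_singleton]
  · exact he (hginj (by rw [hg, hg, hkl]))

theorem exists_isMerge_not_injective_of_infinite (hZ : {i | n i = 0}.Infinite) :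
    ∃ g, IsMerge n g ∧ ¬Injective g := by
  set e : ℕ → I := Subtype.val ∘ hZ.natEmbedding
  have he : Injective e := Subtype.val_injective.comp (hZ.natEmbedding _).injective
  have he0 : ∀ k, n (e k) = 0 := fun k => (hZ.natEmbedding _ k).2
  refine exists_isMerge_not_injective_of_embedding he (h := fun k => k - 1)
    ⟨fun k => ⟨k + 1, rfl⟩, fun k => (finite_Iic (k + 1)).subset fun l hl => ?_, fun k => ?_⟩
    fun hinj => absurd (@hinj 0 1 rfl) zero_ne_one
  · simp only [mem_preimage, mem_singleton_iff] at hl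
    simp only [mem_Iic]
    omega
  · simp [he0]

theorem exists_isMerge_not_injective_of_not_revSeqNat
    (hrev : ¬RevSeqNat (fun i : {i // n i ≠ 0} => n i)) : ∃ g, IsMerge n g ∧ ¬Injective g := by
  obtain ⟨h, hsurj, hninj, hsum⟩ := not_not.1 hrev
  refine exists_isMerge_not_injective_of_embedding Subtype.val_injective
    ⟨hsurj, fun j => not_infinite.1 fun hinf => j.2 ?_, hsum⟩ hninj
  refine (hsum j).symm.trans (finsum_mem_eq_zero_of_infinite ?_)
  rwa [inter_eq_left.2 fun i _ => i.2]

end MergeOfWeights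

section Blocks

variable {A : Type*} {I : Type*} {n : I → ℕ}

theorem ncard_range_toLex_inr (m : ℕ) :
    (range (toLex ∘ (Sum.inr : Fin m → A ⊕ Fin m))).ncard = m := by
  rw [ncard_range_of_injective (toLex.injective.comp Sum.inr_injective), Nat.card_eq_fintype_card,
    Fintype.card_fin]

variable [LinearOrder A] {f : (Σ i, A ⊕ₗ Fin (n i)) → Σ i, A ⊕ₗ Fin (n i)}

theorem Sum.Lex.mem_range_inr_of_le {B : Type*} [LE B] {x y : A ⊕ₗ B} (h : x ≤ y)
    (hx : x ∈ range (toLex ∘ Sum.inr)) : y ∈ range (toLex ∘ Sum.inr) := by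
  obtain ⟨b, rfl⟩ := hx
  induction y with | _ y => ?_
  rcases y with a' | b'
  · exact absurd h Sum.Lex.not_inr_le_inl
  · exact ⟨b', rfl⟩

theorem Sigma.snd_mem_range_inr_of_le {B : I → Type*} [∀ i, LE (B i)] {p q : Σ i, A ⊕ₗ B i}
    (h : p ≤ q) (hp : p.2 ∈ range (toLex ∘ Sum.inr)) : q.2 ∈ range (toLex ∘ Sum.inr) := by
  rcases h with ⟨i, x, y, h⟩
  exact Sum.Lex.mem_range_inr_of_le h hp

theorem snd_mem_range_inr_of_map [NoMaxOrder A] (hf : Monotone f) (hinj : Injective f)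
    {p : Σ i, A ⊕ₗ Fin (n i)} (hp : (f p).2 ∈ range (toLex ∘ Sum.inr)) :
    p.2 ∈ range (toLex ∘ Sum.inr) := by
  obtain ⟨i, x⟩ := p
  induction x with | _ x => ?_
  rcases x with a | t
  swap
  · exact ⟨t, rfl⟩
  have hmaps : MapsTo (fun b => f ⟨i, toLex (Sum.inl b)⟩) (Ici a)
      (({(f ⟨i, toLex (Sum.inl a)⟩).1} : Set I).sigma fun i => range (toLex ∘ Sum.inr)) := by
    intro b hb
    have hle := hf (Sigma.mk_le_mk_iff.2 (Sum.Lex.inl_le_inl_iff.2 hb) :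
      (⟨i, toLex (Sum.inl a)⟩ : Σ i, A ⊕ₗ Fin (n i)) ≤ ⟨i, toLex (Sum.inl b)⟩)
    exact ⟨(Sigma.fst_eq_of_le hle).symm, Sigma.snd_mem_range_inr_of_le hle hp⟩
  -- otherwise `f` would inject the infinite `Ici a` into the finite right part of one block
  refine absurd (Finite.of_injOn hmaps (fun b _ b' _ h => ?_) ?_) (Ici_infinite a)
  · simpa using hinj h
  · exact Finite.singleton_sigma (finite_range _)

theorem snd_map_mem_range_inr [WellFoundedLT A] (hf : Monotone f) (hinj : Injective f)
    {p : Σ i, A ⊕ₗ Fin (n i)} (hp : p.2 ∈ range (toLex ∘ Sum.inr)) :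
    (f p).2 ∈ range (toLex ∘ Sum.inr) := by
  have hf' := hf.strictMono_of_injective hinj
  obtain ⟨i, x⟩ := p
  induction x with | _ x => ?_
  rcases x with a | t
  · simp at hp
  by_contra hft
  rcases hq : f ⟨i, toLex (Sum.inr t)⟩ with ⟨j, y⟩
  rw [hq] at hft
  obtain ⟨b, rfl⟩ : ∃ b, y = toLex (Sum.inl b) := by
    induction y with | _ y => ?_
    rcases y with b | t'
    · exact ⟨b, rfl⟩
    · exact absurd ⟨t', rfl⟩ hft
  -- the left part of block `i` is sent below `⟨j, b⟩`, hence into the left part of block `j`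
  have hleft : ∀ a, ∃ a', f ⟨i, toLex (Sum.inl a)⟩ = ⟨j, toLex (Sum.inl a')⟩ := by
    intro a
    have hlt := hq ▸ hf' (Sigma.mk_lt_mk_iff.2 (Sum.Lex.inl_lt_inr a t))
    generalize f ⟨i, toLex (Sum.inl a)⟩ = q at hlt
    rcases hlt with ⟨_, x, _, hx⟩
    induction x with | _ x => ?_
    rcases x with a' | t'
    · exact ⟨a', rfl⟩
    · exact absurd hx Sum.Lex.not_inr_lt_inl
  choose h hh using hleft
  have hmono : StrictMono h := fun a a' haa' => by
    simpa [hh] using hf' (Sigma.mk_lt_mk_iff.2 (Sum.Lex.inl_lt_inl_iff.2 haa') :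
      (⟨i, toLex (Sum.inl a)⟩ : Σ i, A ⊕ₗ Fin (n i)) < ⟨i, toLex (Sum.inl a')⟩)
  have : h b < b := by
    simpa [hh, hq] using hf' (Sigma.mk_lt_mk_iff.2 (Sum.Lex.inl_lt_inr b t))
  exact hmono.le_apply.not_gt this

theorem isMerge_of_monotone_bijective [WellFoundedLT A] [NoMaxOrder A]
    (hne : ∀ i, Nonempty (A ⊕ₗ Fin (n i))) (hZ : {i | n i = 0}.Finite) (hf : Monotone f)
    (hbij : Bijective f) {g : I → I} (hg : ∀ p, (f p).1 = g p.1) : IsMerge n g := by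
  set T := fun i => range (toLex ∘ (Sum.inr : Fin (n i) → A ⊕ Fin (n i)))
  have hfT : ∀ p, (f p).2 ∈ T (f p).1 ↔ p.2 ∈ T p.1 := fun p =>
    ⟨snd_mem_range_inr_of_map hf hbij.1, snd_map_mem_range_inr hf hbij.1⟩
  have hfin : ∀ j, (g ⁻¹' {j}).Finite := by
    intro j
    have hmaps : MapsTo f {p | g p.1 = j ∧ p.2 ∈ T p.1} (({j} : Set I).sigma T) :=
      fun p hp => ⟨(hg p).trans hp.1, (hfT p).2 hp.2⟩
    have hP := Finite.of_injOn hmaps hbij.1.injOn (Finite.singleton_sigma (finite_range _))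
    refine (hZ.union (hP.image Sigma.fst)).subset fun i hi => ?_
    by_cases hni : n i = 0
    · exact Or.inl hni
    · exact Or.inr ⟨⟨i, toLex (Sum.inr ⟨0, Nat.pos_of_ne_zero hni⟩)⟩, ⟨hi, _, rfl⟩, rfl⟩
  refine ⟨fun j => ?_, hfin, fun j => ?_⟩
  · obtain ⟨x⟩ := hne j
    obtain ⟨p, hp⟩ := hbij.2 ⟨j, x⟩
    exact ⟨p.1, (hg p).symm.trans (congrArg Sigma.fst hp)⟩
  · simpa [T, ncard_range_toLex_inr] using
      finsum_ncard_fiber T (fun i => finite_range _) (.ofBijective f hbij) hg hfT (hfin j)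

theorem reversible_of_forall_isMerge_injective [WellFoundedLT A] [NoMaxOrder A]
    (hne : ∀ i, Nonempty (A ⊕ₗ Fin (n i))) (hZ : {i | n i = 0}.Finite)
    (h : ∀ g, IsMerge n g → Injective g) : Reversible (Σ i, A ⊕ₗ Fin (n i)) := by
  intro f hbij hf p q hpq
  let g i := (f ⟨i, Classical.choice (hne i)⟩).1
  have hg : ∀ p, (f p).1 = g p.1 := fun ⟨i, x⟩ => hf.sigma_fst_eq i x _
  have hginj := h g (isMerge_of_monotone_bijective hne hZ hf hbij hg)
  exact hf.le_of_map_le hbij.1 (fun p q h' => hginj (by rwa [hg, hg] at h')) hpq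

theorem not_reversible_of_isMerge {Q : Type*} [LinearOrder Q]
    (hne : ∀ i, Nonempty ((Q ×ₗ ℕ) ⊕ₗ Fin (n i))) {g : I → I} (hg : IsMerge n g)
    (hninj : ¬Injective g) : ¬Reversible (Σ i, (Q ×ₗ ℕ) ⊕ₗ Fin (n i)) := by
  have hmerge : ∀ j, ∃ φ : (Σ c : {i // g i = j}, (Q ×ₗ ℕ) ⊕ₗ Fin (n c)) ≃ (Q ×ₗ ℕ) ⊕ₗ Fin (n j),
      Monotone φ := by
    intro j
    have : Finite {i // g i = j} := (hg.finite_fiber j).to_subtype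
    have : Nonempty {i // g i = j} := let ⟨i, hi⟩ := hg.surjective j; ⟨⟨i, hi⟩⟩
    obtain ⟨φ, hφ⟩ := exists_monotone_sigma_prodLex_nat_equiv (κ := {i // g i = j}) Q
    obtain ⟨ψ, hψ⟩ := exists_monotone_sigma_fin_equiv (fun c : {i // g i = j} => n c)
      ((finsum_set_coe_eq_finsum_mem _).trans (hg.finsum_fiber j))
    exact exists_monotone_sigma_sumLex_equiv hφ hψ
  choose φ hφ using hmerge
  exact not_reversible_sigma_of_fiber_equiv hne hninj φ hφ

theorem reversible_sigma_sumLex_iff {Q : Type*} [LinearOrder Q] [WellFoundedLT Q]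
    (hne : ∀ i, Nonempty ((Q ×ₗ ℕ) ⊕ₗ Fin (n i))) :
    Reversible (Σ i, (Q ×ₗ ℕ) ⊕ₗ Fin (n i)) ↔
      {i | n i = 0}.Finite ∧ RevSeqNat (fun i : {i // n i ≠ 0} => n i) := by
  refine ⟨fun hrev => ?_, fun ⟨hZ, hrs⟩ =>
    reversible_of_forall_isMerge_injective hne hZ fun g hg => hg.injective hZ hrs⟩
  by_contra hcon
  obtain ⟨g, hg, hninj⟩ : ∃ g, IsMerge n g ∧ ¬Injective g := by
    rcases not_and_or.1 hcon with hZ | hrs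
    · exact exists_isMerge_not_injective_of_infinite hZ
    · exact exists_isMerge_not_injective_of_not_revSeqNat hrs
  exact not_reversible_of_isMerge hne hg hninj hrev

end Blocks

namespace Ordinal

noncomputable def iioAddNatOrderIso (a : Ordinal) (m : ℕ) : Iio (a + m) ≃o Iio a ⊕ₗ Fin m :=
  OrderIso.symm <| StrictMono.orderIsoOfSurjective
    (fun x : Iio a ⊕ₗ Fin m => Sum.elim
      (fun b : Iio a => (⟨b, mem_Iio.2 (b.2.trans_le le_self_add)⟩ : Iio (a + m)))
      (fun t : Fin m => ⟨a + t, by simp [t.2]⟩) (ofLex x))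
    (by
      intro x y h
      induction x with | _ x => ?_
      induction y with | _ y => ?_
      rcases x with b | t <;> rcases y with b' | t'
      · exact Subtype.mk_lt_mk.2 (Sum.Lex.inl_lt_inl_iff.1 h : b < b')
      · exact Subtype.mk_lt_mk.2 (b.2.trans_le le_self_add)
      · exact absurd h Sum.Lex.not_inr_lt_inl
      · exact Subtype.mk_lt_mk.2 (by simpa using (Sum.Lex.inr_lt_inr_iff.1 h : t < t')))
    (by
      rintro ⟨x, hx⟩
      rcases lt_or_ge x a with h | h
      · exact ⟨toLex (Sum.inl ⟨x, h⟩), rfl⟩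
      · obtain ⟨t, ht⟩ := lt_omega0.1 (((sub_lt_of_le h).2 hx).trans (natCast_lt_omega0 m))
        refine ⟨toLex (Sum.inr ⟨t, ?_⟩), ?_⟩
        · exact_mod_cast ht ▸ (sub_lt_of_le h).2 hx
        · simp [← ht, Ordinal.add_sub_cancel_of_le h])

theorem omega0_mul_add_natCast_lt {q q' : Ordinal} (h : q < q') (r : ℕ) : ω * q + r < ω * q' :=
  calc ω * q + r < ω * q + ω := add_lt_add_right (natCast_lt_omega0 r) _
    _ = ω * Order.succ q := (mul_succ ω q).symm
    _ ≤ ω * q' := mul_le_mul_right (Order.succ_le_of_lt h) ω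

noncomputable def iioOmega0MulOrderIso (δ : Ordinal) : Iio (ω * δ) ≃o Iio δ ×ₗ ℕ :=
  OrderIso.symm <| StrictMono.orderIsoOfSurjective
    (fun x : Iio δ ×ₗ ℕ => (⟨ω * (ofLex x).1 + (ofLex x).2,
      omega0_mul_add_natCast_lt (ofLex x).1.2 _⟩ : Iio (ω * δ)))
    (by
      rintro ⟨q, r⟩ ⟨q', r'⟩ h
      rcases Prod.Lex.toLex_lt_toLex.1 h with h | ⟨rfl, h⟩
      · exact (omega0_mul_add_natCast_lt h r).trans_le le_self_add
      · exact Subtype.mk_lt_mk.2 (add_lt_add_right (Nat.cast_lt.2 h) _))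
    (by
      rintro ⟨x, hx⟩
      obtain ⟨r, hr⟩ := lt_omega0.1 (mod_lt x omega0_ne_zero)
      refine ⟨toLex (⟨x / ω, (lt_mul_iff_div_lt omega0_ne_zero).1 hx⟩, r), Subtype.ext ?_⟩
      simp [← hr, div_add_mod])

end Ordinal

/-- For γ a limit ordinal or 0 and naturals n_i with γ + n_i > 0, the disjoint
union poset ⋃_{i∈I} (γ + n_i) is reversible iff I_γ = {i | n_i = 0} is finite and
⟨n_i : i ∈ I \ I_γ⟩ is a reversible sequence of natural numbers. -/
theorem stmt6 {I : Type*} (γ : Ordinal) (hγ : γ = 0 ∨ Order.IsSuccLimit γ) (n : I → ℕ)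
    (hpos : ∀ i, 0 < γ + (n i : Ordinal)) :
    Reversible (Σ i, (γ + (n i : Ordinal)).ToType) ↔
      ({i | n i = 0}.Finite ∧ RevSeqNat (fun i : {i // n i ≠ 0} => n i)) := by
  obtain ⟨δ, rfl⟩ : Ordinal.omega0 ∣ γ := Ordinal.isSuccPrelimit_iff_omega0_dvd.1 <|
    hγ.elim (· ▸ Ordinal.isSuccPrelimit_zero) Order.IsSuccLimit.isSuccPrelimit
  let e i : (Ordinal.omega0 * δ + n i).ToType ≃o (Iio δ ×ₗ ℕ) ⊕ₗ Fin (n i) :=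
    Ordinal.ToType.mk.symm.trans <| (Ordinal.iioAddNatOrderIso _ _).trans <|
      OrderIso.sumLexCongr (Ordinal.iioOmega0MulOrderIso δ) (.refl _)
  rw [(Sigma.orderIsoCongrRight e).reversible_iff]
  exact reversible_sigma_sumLex_iff fun i =>
    (e i).toEquiv.nonempty_congr.1 (Ordinal.nonempty_toType_iff.2 (hpos i).ne')
end

section
/- Suppose ⟨α_i : i ∈ I⟩ is a sequence of nonzero ordinals, f : I → I is a surjection, and for every i ∈ I we have α_i ≤ α_{f(i)}. If for some ordinal α the set I_α = {i : α_i = α} is finite and for every β < α the set I_β is finite, then f[I_α] = I_α. -/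
/-- If ⟨α_i : i ∈ I⟩ is a sequence of nonzero ordinals, f : I → I is a
surjection with α_i ≤ α_{f(i)} for all i, and the level set I_α is finite as well as all
level sets I_β for β < α, then f[I_α] = I_α. -/
theorem stmt9 {I : Type*} (α : I → Ordinal) (h0 : ∀ i, α i ≠ 0)
    (f : I → I) (hsur : Function.Surjective f) (hmono : ∀ i, α i ≤ α (f i))
    (a : Ordinal) (ha : {i | α i = a}.Finite) (hb : ∀ b < a, {i | α i = b}.Finite) :
    f '' {i | α i = a} = {i | α i = a} := by
  -- Key claim: every element of the level set I_a has a preimage in I_a.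
  have key : ∀ j, α j = a → ∃ i, α i = a ∧ f i = j := by
    intro j hj
    by_contra hc
    push_neg at hc
    choose pre hpre using hsur
    let g : ℕ → I := fun n => Nat.rec j (fun _ x => pre x) n
    have hgf : ∀ n, f (g (n + 1)) = g n := fun n => hpre _
    have hsucc : ∀ n, α (g (n + 1)) ≤ α (g n) := by
      intro n
      conv_rhs => rw [← hgf n]
      exact hmono _
    have hanti : Antitone fun n => α (g n) := antitone_nat_of_succ_le hsucc
    have h1 : α (g 1) < a := by
      have hle : α (g 1) ≤ a :=
        calc α (g 1) ≤ α (f (g 1)) := hmono _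
          _ = α (g 0) := congrArg α (hgf 0)
          _ = a := hj
      exact lt_of_le_of_ne hle fun h => hc (g 1) h (hgf 0)
    have hlt : ∀ n, α (g (n + 1)) < a := fun n =>
      lt_of_le_of_lt (hanti (Nat.succ_le_succ (Nat.zero_le n))) h1
    have hiter : ∀ k t, f^[k] (g (k + t)) = g t := by
      intro k
      induction k with
      | zero => intro t; simp
      | succ k ih =>
        intro t
        have h : k + 1 + t = (k + t) + 1 := by omega
        rw [h, Function.iterate_succ_apply, hgf, ih]
    obtain ⟨b, ⟨N, hN⟩, hbmin⟩ :=
      Ordinal.lt_wf.has_min (Set.range fun n => α (g (n + 1))) ⟨_, ⟨0, rfl⟩⟩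
    have hconst : ∀ n, N ≤ n → α (g (n + 1)) = b := by
      intro n hn
      refine le_antisymm ?_ (not_lt.1 (hbmin _ ⟨n, rfl⟩))
      calc α (g (n + 1)) ≤ α (g (N + 1)) := hanti (Nat.succ_le_succ hn)
        _ = b := hN
    have hba : b < a := hN ▸ hlt N
    have hfin : Finite {i // α i = b} := (hb b hba).to_subtype
    let h : ℕ → {i // α i = b} := fun n =>
      ⟨g (N + 1 + n), by
        have e : N + 1 + n = (N + n) + 1 := by omega
        rw [e]; exact hconst (N + n) (Nat.le_add_right N n)⟩
    obtain ⟨m, n, hmn, heq⟩ := Finite.exists_ne_map_eq_of_infinite h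
    have heq' : g (N + 1 + m) = g (N + 1 + n) := congrArg Subtype.val heq
    have final : ∀ m n, m < n → g (N + 1 + m) = g (N + 1 + n) → False := by
      intro m n hlt' hgeq
      have e1 : N + 1 + n = (N + 1 + m) + (n - m) := by omega
      have e2 : N + 1 + m = (N + 1 + m) + 0 := by omega
      have i1 := hiter (N + 1 + m) (n - m)
      have i2 := hiter (N + 1 + m) 0
      rw [e1] at hgeq
      rw [← e2] at i2
      rw [hgeq] at i2
      rw [i1] at i2
      -- i2 : g (n - m) = g 0
      have e3 : n - m = (n - m - 1) + 1 := by omega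
      have : α (g (n - m)) < a := by rw [e3]; exact hlt _
      rw [i2] at this
      exact absurd hj (ne_of_lt this)
    rcases hmn.lt_or_gt with h' | h'
    · exact final m n h' heq'
    · exact final n m h' heq'.symm
  -- Now use finiteness of I_a to conclude f '' I_a = I_a.
  have hfinA : Finite {i // α i = a} := ha.to_subtype
  choose F hF1 hF2 using fun j : {i // α i = a} => key j.1 j.2
  let G : {i // α i = a} → {i // α i = a} := fun j => ⟨F j, hF1 j⟩
  have hGinj : Function.Injective G := by
    intro x y hxy
    have hFxy : F x = F y := congrArg Subtype.val hxy
    apply Subtype.ext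
    rw [← hF2 x, ← hF2 y, hFxy]
  have hGsur : Function.Surjective G := Finite.surjective_of_injective hGinj
  ext k
  constructor
  · rintro ⟨i, hi, rfl⟩
    obtain ⟨j, hj⟩ := hGsur ⟨i, hi⟩
    have hFi : F j = i := congrArg Subtype.val hj
    show α (f i) = a
    rw [← hFi, hF2 j]
    exact j.2
  · intro hk
    exact ⟨F ⟨k, hk⟩, hF1 _, hF2 _⟩
end

section
/- Let P = ⋃_{i∈I} L_i where each L_i is either a well order or the inverse of a well order, with I_w = {i : L_i infinite well order} and I_{w*} = {i : L_i infinite inverse well order} both nonempty, and I_fin = {i : L_i finite}. Then P is reversible if and only if both P_W = ⋃_{i∈I_fin ∪ I_w} L_i and P_{W*} = ⋃_{i∈I_fin ∪ I_{w*}} L_i are reversible. -/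
open Function Set

namespace Reversible

variable {P Q : Type*} [PartialOrder P] [PartialOrder Q]

theorem of_orderIso_s11 (h : Reversible P) (e : P ≃o Q) : Reversible Q := by
  intro f hf hmono x y hxy
  simpa using h (e.symm ∘ f ∘ e) (e.symm.bijective.comp (hf.comp e.bijective))
    (e.symm.monotone.comp (hmono.comp e.monotone)) (e.symm x) (e.symm y) (by simpa using hxy)

/-- Since `S` is a union of connected components, extending a self-map of `S` by the identity
keeps it monotone. -/
theorem subtype (h : Reversible P) {S : Set P} (hu : IsUpperSet S) (hl : IsLowerSet S) :
    Reversible S := by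
  classical
  intro g hg hmono x y hxy
  let G := (Equiv.ofBijective g hg).subtypeCongr (Equiv.refl {x // x ∉ S})
  have hG_mem : ∀ a (ha : a ∈ S), G a = g ⟨a, ha⟩ :=
    fun a ha => Equiv.Perm.subtypeCongr.left_apply _ _ ha
  have hG_notMem : ∀ a ∉ S, G a = a := fun a ha => Equiv.Perm.subtypeCongr.right_apply _ _ ha
  have hGmono : Monotone G := by
    intro a b hab
    by_cases ha : a ∈ S
    · have hb : b ∈ S := hu hab ha
      rw [hG_mem a ha, hG_mem b hb]
      exact hmono (show (⟨a, ha⟩ : S) ≤ ⟨b, hb⟩ from hab)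
    · have hb : b ∉ S := fun hb => ha (hl hab hb)
      rwa [hG_notMem a ha, hG_notMem b hb]
  exact h G G.bijective hGmono x y (by rwa [hG_mem x x.2, hG_mem y y.2])

theorem of_orderEmbedding (h : Reversible P) (e : Q ↪o P) (hu : IsUpperSet (range e))
    (hl : IsLowerSet (range e)) : Reversible Q :=
  (h.subtype hu hl).of_orderIso_s11 e.orderIso.symm

theorem le_of_map_le {S : Set P} (h : Reversible S) {f : P → P} (hf : Bijective f)
    (hmono : Monotone f) (hS : ∀ x, f x ∈ S ↔ x ∈ S) {x y : P} (hx : x ∈ S) (hy : y ∈ S)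
    (hxy : f x ≤ f y) : x ≤ y := by
  have hmaps : MapsTo f S S := fun z hz => (hS z).2 hz
  refine h (hmaps.restrict f S S) ⟨?_, ?_⟩ (fun a b hab => hmono hab) ⟨x, hx⟩ ⟨y, hy⟩ hxy
  · exact fun a b hab => Subtype.ext (hf.1 (congrArg Subtype.val hab))
  · rintro ⟨z, hz⟩
    obtain ⟨w, rfl⟩ := hf.2 z
    exact ⟨⟨w, (hS w).1 hz⟩, rfl⟩

end Reversible

namespace Sigma

variable {I J : Type*} {L : I → Type*}

section LE

variable [∀ i, LE (L i)]

theorem fst_eq_of_le_s11 {x y : Σ i, L i} (h : x ≤ y) : x.1 = y.1 := by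
  obtain ⟨i, a, b, -⟩ := h
  rfl

theorem isUpperSet_preimage_fst (T : Set I) : IsUpperSet (Sigma.fst ⁻¹' T : Set (Σ i, L i)) :=
  fun _ _ h hx => (fst_eq_of_le_s11 h ▸ hx : _ ∈ T)

theorem isLowerSet_preimage_fst (T : Set I) : IsLowerSet (Sigma.fst ⁻¹' T : Set (Σ i, L i)) :=
  fun _ _ h hx => ((fst_eq_of_le_s11 h).symm ▸ hx : _ ∈ T)

end LE

section PartialOrder

variable [∀ i, PartialOrder (L i)]

def reindexOrderEmbedding (g : J ↪ I) : (Σ j, L (g j)) ↪o Σ i, L i :=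
  OrderEmbedding.ofMapLEIff (Sigma.map g fun _ => id) <| by
    rintro ⟨j, a⟩ ⟨j', b⟩
    constructor
    · intro h
      obtain rfl : j = j' := g.injective (fst_eq_of_le_s11 h)
      exact Sigma.mk_le_mk_iff.2 (Sigma.mk_le_mk_iff.1 h)
    · rintro ⟨j, a, b, hab⟩
      exact Sigma.mk_le_mk_iff.2 hab

theorem range_reindexOrderEmbedding (g : J ↪ I) :
    range (reindexOrderEmbedding (L := L) g) = Sigma.fst ⁻¹' range g := by
  ext ⟨i, a⟩
  constructor
  · rintro ⟨⟨j, b⟩, h⟩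
    exact ⟨j, (Sigma.mk.inj_iff.1 h).1⟩
  · rintro ⟨j, rfl⟩
    exact ⟨⟨j, a⟩, rfl⟩

end PartialOrder

section Monotone

variable [∀ i, LinearOrder (L i)]

theorem exists_eq_map_of_monotone {f : (Σ i, L i) → Σ i, L i} (hf : Monotone f) :
    ∃ (σ : I → I) (φ : ∀ i, L i → L (σ i)), f = Sigma.map σ φ := by
  have hcomp : ∀ i, ∃ j, ∀ a : L i, (f ⟨i, a⟩).1 = j := by
    intro i
    rcases isEmpty_or_nonempty (L i) with h | ⟨⟨a₀⟩⟩
    · exact ⟨i, fun a => h.elim a⟩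
    · refine ⟨(f ⟨i, a₀⟩).1, fun a => ?_⟩
      rcases le_total a a₀ with h | h
      · exact fst_eq_of_le_s11 (hf (Sigma.mk_le_mk_iff.2 h))
      · exact (fst_eq_of_le_s11 (hf (Sigma.mk_le_mk_iff.2 h))).symm
  choose σ hσ using hcomp
  refine ⟨σ, fun i a => hσ i a ▸ (f ⟨i, a⟩).2, funext fun ⟨i, a⟩ => ?_⟩
  exact Sigma.ext (hσ i a) (eqRec_heq _ _).symm

variable {σ : I → I} {φ : ∀ i, L i → L (σ i)}

theorem strictMono_of_map (hmono : Monotone (Sigma.map σ φ)) (hinj : Injective (Sigma.map σ φ))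
    (i : I) : StrictMono (φ i) := by
  refine Monotone.strictMono_of_injective (fun a b hab => ?_) (hinj.of_sigma_map i)
  exact Sigma.mk_le_mk_iff.1 (hmono (Sigma.mk_le_mk_iff.2 hab))

end Monotone

end Sigma

namespace Reversible

variable {I J : Type*} {L : I → Type*} [∀ i, PartialOrder (L i)]

theorem sigma_reindex (h : Reversible (Σ i, L i)) (g : J ↪ I) : Reversible (Σ j, L (g j)) :=
  h.of_orderEmbedding (Sigma.reindexOrderEmbedding g)
    (Sigma.range_reindexOrderEmbedding (L := L) g ▸ Sigma.isUpperSet_preimage_fst _)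
    (Sigma.range_reindexOrderEmbedding (L := L) g ▸ Sigma.isLowerSet_preimage_fst _)

theorem sigma_le_of_map_le {Q : I → Prop} (h : Reversible (Σ i : Subtype Q, L i))
    {f : (Σ i, L i) → Σ i, L i} (hf : Bijective f) (hmono : Monotone f)
    (hQ : ∀ x, Q (f x).1 ↔ Q x.1) {x y : Σ i, L i} (hx : Q x.1) (hy : Q y.1)
    (hxy : f x ≤ f y) : x ≤ y := by
  let e := Sigma.reindexOrderEmbedding (L := L) (.subtype Q)
  have hmem : ∀ z, z ∈ range e ↔ Q z.1 := fun z => by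
    rw [Sigma.range_reindexOrderEmbedding]
    simp
  exact (h.of_orderIso_s11 e.orderIso).le_of_map_le hf hmono (fun z => by rw [hmem, hmem, hQ])
    ((hmem x).2 hx) ((hmem y).2 hy) hxy

end Reversible

section Absorption

variable {M : Option ℕ → Type*} [∀ o, PartialOrder (M o)]

def absorbShift (ψ : M (some 0) ⊕ₗ M none ≃o M none) (φ : ∀ k, M (some (k + 1)) ≃o M (some k)) :
    (Σ o, M o) → Σ o, M o
  | ⟨none, x⟩ => ⟨none, ψ (toLex (.inr x))⟩
  | ⟨some 0, c⟩ => ⟨none, ψ (toLex (.inl c))⟩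
  | ⟨some (k + 1), c⟩ => ⟨some k, φ k c⟩

variable (ψ : M (some 0) ⊕ₗ M none ≃o M none) (φ : ∀ k, M (some (k + 1)) ≃o M (some k))

theorem bijective_absorbShift : Bijective (absorbShift ψ φ) := by
  constructor
  · rintro ⟨_ | _ | k, a⟩ ⟨_ | _ | k', b⟩ h <;> aesop (add norm absorbShift)
  · rintro ⟨_ | k, b⟩
    · rcases hy : ofLex (ψ.symm b) with c | x
      · exact ⟨⟨some 0, c⟩, by simp [absorbShift, ← hy]⟩
      · exact ⟨⟨none, x⟩, by simp [absorbShift, ← hy]⟩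
    · exact ⟨⟨some (k + 1), (φ k).symm b⟩, by simp [absorbShift]⟩

theorem monotone_absorbShift : Monotone (absorbShift ψ φ) := by
  rintro _ _ ⟨_ | _ | k, a, b, hab⟩ <;> refine Sigma.mk_le_mk_iff.2 ?_
  · exact ψ.monotone (Sum.Lex.inr_le_inr_iff.2 hab)
  · exact ψ.monotone (Sum.Lex.inl_le_inl_iff.2 hab)
  · exact (φ k).monotone hab

theorem not_reversible_sigma_option (ψ : M (some 0) ⊕ₗ M none ≃o M none)
    (φ : ∀ k, M (some (k + 1)) ≃o M (some k)) (c : M (some 0)) :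
    ¬ Reversible (Σ o, M o) := by
  intro h
  have hle : absorbShift ψ φ ⟨some 0, c⟩ ≤ absorbShift ψ φ ⟨none, ψ (toLex (.inl c))⟩ :=
    Sigma.mk_le_mk_iff.2 (ψ.monotone (Sum.Lex.inl_le_inr _ _))
  exact Option.some_ne_none 0
    (Sigma.fst_eq_of_le_s11 (h _ (bijective_absorbShift ψ φ) (monotone_absorbShift ψ φ) _ _ hle))

end Absorption

universe u

/-- The ordinal identity `n + o = o` for `o ≥ ω`. -/
theorem nonempty_lex_sum_orderIso_of_finite (C α : Type u) [LinearOrder C] [Finite C]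
    [LinearOrder α] [WellFoundedLT α] [Infinite α] : Nonempty (C ⊕ₗ α ≃o α) := by
  have : Fintype C := Fintype.ofFinite C
  have hω : Ordinal.omega0 ≤ Ordinal.type (α := α) (· < ·) := by
    rw [← Ordinal.aleph0_le_card, Ordinal.card_type]
    exact Cardinal.aleph0_le_mk α
  have h := Ordinal.natCast_add_of_omega0_le hω (Fintype.card C)
  rw [← Ordinal.type_fintype (· < · : C → C → Prop), ← Ordinal.type_sum_lex] at h
  obtain ⟨e⟩ := Ordinal.type_eq.1 h
  exact ⟨OrderIso.ofRelIsoLT (Sum.Lex.toLexRelIsoLT.symm.trans e)⟩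

theorem nonempty_orderIso_of_natCard_eq {α β : Type*} [LinearOrder α] [LinearOrder β]
    (hpos : 0 < Nat.card α) (h : Nat.card α = Nat.card β) : Nonempty (α ≃o β) := by
  have := Nat.finite_of_card_ne_zero hpos.ne'
  have := Nat.finite_of_card_ne_zero (h ▸ hpos).ne'
  have := Fintype.ofFinite α
  have := Fintype.ofFinite β
  rw [Nat.card_eq_fintype_card, Nat.card_eq_fintype_card] at h
  exact ⟨(Fintype.orderIsoFinOfCardEq α h).symm.trans (Fintype.orderIsoFinOfCardEq β rfl)⟩

theorem Reversible.finite_setOf_natCard_eq {J : Type*} {K : J → Type u}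
    [∀ j, LinearOrder (K j)] (h : Reversible (Σ j, K j)) {j₀ : J} [Infinite (K j₀)]
    [WellFoundedLT (K j₀)] {n : ℕ} (hn : 0 < n) : {j | Nat.card (K j) = n}.Finite := by
  by_contra hinf
  have := Set.infinite_coe_iff.2 hinf
  let E : ℕ ↪ {j | Nat.card (K j) = n} := Infinite.natEmbedding _
  have hE : ∀ k, Nat.card (K (E k)) = n := fun k => (E k).2
  have hE₀ : ∀ k, (E k : J) ≠ j₀ := fun k h => by
    have := hE k
    rw [h, Nat.card_eq_zero_of_infinite] at this
    omega
  let g : Option ℕ ↪ J := ⟨fun o => o.elim j₀ fun k => E k, by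
    rintro (_ | k) (_ | k') h
    · rfl
    · exact absurd h.symm (hE₀ k')
    · exact absurd h (hE₀ k)
    · exact congrArg some (E.injective (Subtype.ext h))⟩
  obtain ⟨c⟩ : Nonempty (K (E 0)) := (Nat.card_pos_iff.1 ((hE 0).symm ▸ hn)).1
  have : Finite (K (E 0)) := Nat.finite_of_card_ne_zero ((hE 0).symm ▸ hn).ne'
  obtain ⟨ψ⟩ := nonempty_lex_sum_orderIso_of_finite (K (E 0)) (K j₀)
  have φ : ∀ k, K (E (k + 1)) ≃o K (E k) := fun k =>
    (nonempty_orderIso_of_natCard_eq ((hE _).symm ▸ hn) ((hE _).trans (hE _).symm)).some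
  exact not_reversible_sigma_option (M := fun o => K (g o)) ψ φ c (h.sigma_reindex g)

theorem Set.Finite.mapsTo_of_preimage_subset {α : Type*} {f : α → α} (hf : Bijective f)
    {Y : Set α} (hY : Y.Finite) (h : f ⁻¹' Y ⊆ Y) : MapsTo f Y Y := by
  have hcard : (f ⁻¹' Y).ncard = Y.ncard :=
    ncard_preimage_of_injective_subset_range hf.1 (by simp [hf.2.range_eq])
  exact (eq_of_subset_of_ncard_le h hcard.ge hY).superset

/-- The components of positive size at most `#(L i)` form a finite set of elements that contains
its preimage, hence also its image, under the bijection. -/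
theorem Sigma.finite_of_bijective_map {I : Type*} {L : I → Type*}
    (hcard : ∀ n, 0 < n → {i | Nat.card (L i) = n}.Finite) {σ : I → I}
    {φ : ∀ i, L i → L (σ i)} (hf : Bijective (Sigma.map σ φ)) {i : I} (a : L i)
    [Finite (L i)] : Finite (L (σ i)) := by
  set n := Nat.card (L i)
  let Y : Set (Σ i, L i) := {x | 0 < Nat.card (L x.1) ∧ Nat.card (L x.1) ≤ n}
  have hY : Y.Finite := by
    have hA : {j | 0 < Nat.card (L j) ∧ Nat.card (L j) ≤ n}.Finite :=
      ((Finset.Icc 1 n).finite_toSet.biUnion fun m hm => hcard m (by rw [Finset.coe_Icc, mem_Icc] at hm; omega)).subset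
        fun j ⟨hpos, hle⟩ => mem_biUnion (x := Nat.card (L j)) (by rw [Finset.coe_Icc, mem_Icc]; omega) rfl
    refine (hA.biUnion (t := fun j => range (Sigma.mk j)) fun j hj => ?_).subset
      fun x hx => mem_biUnion hx ⟨x.2, rfl⟩
    have := Nat.finite_of_card_ne_zero hj.1.ne'
    exact finite_range _
  have hpre : Sigma.map σ φ ⁻¹' Y ⊆ Y := by
    rintro ⟨j, b⟩ hb
    obtain ⟨hpos, hle⟩ : 0 < Nat.card (L (σ j)) ∧ Nat.card (L (σ j)) ≤ n := hb
    have := Nat.finite_of_card_ne_zero hpos.ne'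
    have hinj := hf.1.of_sigma_map j
    have := Finite.of_injective _ hinj
    have : Nonempty (L j) := ⟨b⟩
    exact ⟨Nat.card_pos, (Nat.card_le_card_of_injective _ hinj).trans hle⟩
  have : Nonempty (L i) := ⟨a⟩
  have hmem := hY.mapsTo_of_preimage_subset hf hpre (show ⟨i, a⟩ ∈ Y from ⟨Nat.card_pos, le_rfl⟩)
  exact Nat.finite_of_card_ne_zero hmem.1.ne'

theorem StrictMono.wellFoundedLT_iff {α β : Type*} [LinearOrder α] [LinearOrder β] {φ : α → β}
    (hφ : StrictMono φ) (hfin : Finite α → Finite β) (hβ : WellFoundedLT β ∨ WellFoundedGT β) :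
    WellFoundedLT β ↔ WellFoundedLT α := by
  refine ⟨fun _ => hφ.wellFoundedLT, fun hα => ?_⟩
  rcases hβ with hβ | hβ
  · exact hβ
  rcases finite_or_infinite α with hα' | hα'
  · have := hfin hα'
    infer_instance
  · have := hφ.wellFoundedGT
    exact absurd (Finite.of_wellFoundedLT_wellFoundedGT α) (not_finite_iff_infinite.2 hα')

theorem StrictMono.wellFoundedGT_iff {α β : Type*} [LinearOrder α] [LinearOrder β] {φ : α → β}
    (hφ : StrictMono φ) (hfin : Finite α → Finite β) (hβ : WellFoundedLT β ∨ WellFoundedGT β) :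
    WellFoundedGT β ↔ WellFoundedGT α := by
  simpa only [wellFoundedLT_dual_iff] using hφ.dual.wellFoundedLT_iff hfin (by
    simpa only [wellFoundedLT_dual_iff, wellFoundedGT_dual_iff] using hβ.symm)

theorem finite_or_infinite_and_iff {α : Type*} {p : Prop} (h : Finite α → p) :
    Finite α ∨ (Infinite α ∧ p) ↔ p :=
  ⟨fun h' => h'.elim h And.right, fun hp => (finite_or_infinite α).imp_right (⟨·, hp⟩)⟩

theorem stmt11_general {I : Type*} (L : I → Type*) [∀ i, LinearOrder (L i)]
    (hwo : ∀ i, WellFoundedLT (L i) ∨ WellFoundedGT (L i))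
    (hw : ∃ i, Infinite (L i) ∧ WellFoundedLT (L i)) :
    Reversible (Σ i, L i) ↔
      (Reversible (Σ i : {i // Finite (L i) ∨ (Infinite (L i) ∧ WellFoundedLT (L i))}, L i) ∧
        Reversible (Σ i : {i // Finite (L i) ∨ (Infinite (L i) ∧ WellFoundedGT (L i))}, L i)) := by
  have hLT : ∀ i, Finite (L i) ∨ (Infinite (L i) ∧ WellFoundedLT (L i)) ↔ WellFoundedLT (L i) :=
    fun i => finite_or_infinite_and_iff fun _ => inferInstance
  have hGT : ∀ i, Finite (L i) ∨ (Infinite (L i) ∧ WellFoundedGT (L i)) ↔ WellFoundedGT (L i) :=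
    fun i => finite_or_infinite_and_iff fun _ => inferInstance
  refine ⟨fun h => ⟨h.sigma_reindex (.subtype _), h.sigma_reindex (.subtype _)⟩, ?_⟩
  rintro ⟨hW, hWdual⟩ f hf hmono x y hxy
  obtain ⟨i₀, hi₀, hwf₀⟩ := hw
  have hcard : ∀ n, 0 < n → {i | Nat.card (L i) = n}.Finite := fun n hn =>
    ((hW.finite_setOf_natCard_eq (j₀ := ⟨i₀, .inr ⟨hi₀, hwf₀⟩⟩) hn).image Subtype.val).subset
      fun i hi => ⟨⟨i, .inl (Nat.finite_of_card_ne_zero (hi ▸ hn).ne')⟩, hi, rfl⟩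
  obtain ⟨σ, φ, rfl⟩ := Sigma.exists_eq_map_of_monotone hmono
  have hfin : ∀ i, L i → Finite (L i) → Finite (L (σ i)) :=
    fun i a _ => Sigma.finite_of_bijective_map hcard hf a
  have hφ := Sigma.strictMono_of_map hmono hf.1
  have hpresLT : ∀ z : Σ i, L i, WellFoundedLT (L (σ z.1)) ↔ WellFoundedLT (L z.1) :=
    fun z => (hφ z.1).wellFoundedLT_iff (hfin _ z.2) (hwo _)
  have hpresGT : ∀ z : Σ i, L i, WellFoundedGT (L (σ z.1)) ↔ WellFoundedGT (L z.1) :=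
    fun z => (hφ z.1).wellFoundedGT_iff (hfin _ z.2) (hwo _)
  have hσ : σ x.1 = σ y.1 := Sigma.fst_eq_of_le_s11 hxy
  rcases hwo (σ x.1) with hx | hx
  · refine hW.sigma_le_of_map_le hf hmono (fun z => ?_) ?_ ?_ hxy
    · exact (hLT _).trans ((hpresLT z).trans (hLT _).symm)
    · exact (hLT _).2 ((hpresLT x).1 hx)
    · exact (hLT _).2 ((hpresLT y).1 (hσ ▸ hx))
  · refine hWdual.sigma_le_of_map_le hf hmono (fun z => ?_) ?_ ?_ hxy
    · exact (hGT _).trans ((hpresGT z).trans (hGT _).symm)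
    · exact (hGT _).2 ((hpresGT x).1 hx)
    · exact (hGT _).2 ((hpresGT y).1 (hσ ▸ hx))

/-- Let P = ⋃_{i∈I} L_i where each L_i is a well order or the inverse of a
well order, and both I_w (infinite well order components) and I_{w*} (infinite inverse
well order components) are nonempty. Then P is reversible iff both
P_W = ⋃_{i ∈ I_fin ∪ I_w} L_i and P_{W*} = ⋃_{i ∈ I_fin ∪ I_{w*}} L_i are reversible. -/
theorem stmt11 {I : Type*} (L : I → Type*) [∀ i, LinearOrder (L i)]
    (hwo : ∀ i, WellFoundedLT (L i) ∨ WellFoundedGT (L i))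
    (hw : ∃ i, Infinite (L i) ∧ WellFoundedLT (L i))
    (hws : ∃ i, Infinite (L i) ∧ WellFoundedGT (L i)) :
    Reversible (Σ i, L i) ↔
      (Reversible (Σ i : {i // Finite (L i) ∨ (Infinite (L i) ∧ WellFoundedLT (L i))}, L i) ∧
        Reversible (Σ i : {i // Finite (L i) ∨ (Infinite (L i) ∧ WellFoundedGT (L i))}, L i)) :=
  stmt11_general L hwo hw
end

section
/- For a sequence of nonzero cardinals ⟨κ_i : i ∈ I⟩, the following are equivalent: (d) there is no non-injective surjection f : I → I with Σ_{i∈f⁻¹[{j}]} κ_i = κ_j for all j (reversible sequence of cardinals); (e) either ⟨κ_i⟩ is finite-to-one, or all κ_i are finite and ⟨κ_i⟩ is a reversible sequence of natural numbers. -/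
universe u

/-- A sequence of (nonzero) cardinals is reversible iff there is no non-injective
surjection f : I → I such that for all j, the (cardinal) sum of κ_i over f⁻¹[{j}]
equals κ_j. -/
def RevSeqCard {I : Type u} (κ : I → Cardinal.{u}) : Prop :=
  ¬ ∃ f : I → I, Function.Surjective f ∧ ¬ Function.Injective f ∧
      ∀ j, (Cardinal.sum fun i : f ⁻¹' {j} => κ i) = κ j

namespace Stmt12Aux

open Cardinal

/-! ### Finite cardinal sums -/

def sigmaOptionEquiv {α : Type u} (g : Option α → Type u) :
    (Σ i : Option α, g i) ≃ (g none ⊕ Σ a : α, g (some a)) where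
  toFun := fun x => match x with
    | ⟨none, y⟩ => Sum.inl y
    | ⟨some a, y⟩ => Sum.inr ⟨a, y⟩
  invFun := fun s => match s with
    | Sum.inl y => ⟨none, y⟩
    | Sum.inr ⟨a, y⟩ => ⟨some a, y⟩
  left_inv := by rintro ⟨(_ | a), y⟩ <;> rfl
  right_inv := by rintro (y | ⟨a, y⟩) <;> rfl

theorem sum_option {α : Type u} (f : Option α → Cardinal.{u}) :
    Cardinal.sum f = f none + Cardinal.sum (fun a => f (some a)) := by
  have h1 : Cardinal.sum f = #(Σ i : Option α, (f i).out) := rfl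
  rw [h1, mk_congr (sigmaOptionEquiv (fun i => (f i).out)), mk_sum, lift_id, lift_id,
    mk_sigma, mk_out]
  congr 1
  exact congrArg Cardinal.sum (funext fun a => mk_out _)

theorem sum_comp_equiv {α β : Type u} (e : α ≃ β) (f : β → Cardinal.{u}) :
    Cardinal.sum (fun a => f (e a)) = Cardinal.sum f :=
  Cardinal.mk_sigma_congr e (fun _ => rfl)

theorem sum_eq_finset_sum {α : Type u} [Fintype α] (f : α → Cardinal.{u}) :
    Cardinal.sum f = ∑ i, f i := by
  refine Fintype.induction_empty_option
    (P := fun γ _ => ∀ g : γ → Cardinal.{u}, Cardinal.sum g = ∑ i, g i) ?_ ?_ ?_ α f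
  · intro γ β hβ e ih g
    letI F : Fintype γ := Fintype.ofEquiv _ e.symm
    rw [← sum_comp_equiv e g, ih (fun a => g (e a)), Equiv.sum_comp e g]
  · intro g
    have h0 : IsEmpty (Σ i : PEmpty.{u+1}, (g i).out) := inferInstance
    have h1 : Cardinal.sum g = #(Σ i : PEmpty.{u+1}, (g i).out) := rfl
    rw [h1, mk_eq_zero]
    simp
  · intro γ hγ ih g
    rw [sum_option, ih, Fintype.sum_option]

theorem sum_set_finite {I : Type u} (κ : I → Cardinal.{u}) {s : Set I} (hs : s.Finite) :
    (Cardinal.sum fun i : s => κ i) = ∑ i ∈ hs.toFinset, κ i := by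
  haveI := hs.fintype
  rw [sum_eq_finset_sum, ← Finset.sum_coe_sort (hs.toFinset) κ]
  exact Fintype.sum_equiv (Equiv.subtypeEquivRight (fun x => (hs.mem_toFinset).symm))
    _ _ (fun x => rfl)

theorem sum_singleton {I : Type u} (κ : I → Cardinal.{u}) (j : I) :
    (Cardinal.sum fun i : ({j} : Set I) => κ i) = κ j := by
  rw [sum_set_finite κ (Set.finite_singleton j)]
  have : (Set.finite_singleton j).toFinset = {j} := by ext x; simp
  rw [this, Finset.sum_singleton]

theorem sum_pair {I : Type u} (κ : I → Cardinal.{u}) {x y : I} (hxy : x ≠ y) :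
    (Cardinal.sum fun i : ({x, y} : Set I) => κ i) = κ x + κ y := by
  classical
  have hfin : ({x, y} : Set I).Finite := (Set.finite_singleton y).insert x
  rw [sum_set_finite κ hfin]
  have : hfin.toFinset = {x, y} := by ext z; simp
  rw [this, Finset.sum_pair hxy]

/-! ### The chain construction producing a bad surjection -/

theorem not_rev_of_chain {I : Type u} (κ : I → Cardinal.{u}) (g : ℕ → I)
    (hg : Function.Injective g) (hc : ∀ n, κ (g (n + 1)) = κ (g 1))
    (habs : κ (g 0) + κ (g 1) = κ (g 0)) : ¬ RevSeqCard κ := by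
  classical
  intro hrev
  apply hrev
  set F : I → I := fun i =>
    if h : ∃ n, g (n + 2) = i then g (h.choose + 1) else if i = g 1 then g 0 else i with hFdef
  have hF2 : ∀ n, F (g (n + 2)) = g (n + 1) := by
    intro n
    have h : ∃ m, g (m + 2) = g (n + 2) := ⟨n, rfl⟩
    have hch : h.choose = n := by
      have := h.choose_spec
      have := hg this
      omega
    simp only [hFdef, dif_pos h, hch]
  have hF1 : F (g 1) = g 0 := by
    have h : ¬ ∃ m, g (m + 2) = g 1 := by
      rintro ⟨m, hm⟩; have := hg hm; omega
    simp [hFdef, dif_neg h]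
  have hF0 : F (g 0) = g 0 := by
    have h : ¬ ∃ m, g (m + 2) = g 0 := by
      rintro ⟨m, hm⟩; have := hg hm; omega
    have h1 : g 0 ≠ g 1 := fun e => by have := hg e; omega
    simp only [hFdef, dif_neg h, if_neg h1]
  have hFout : ∀ i, (∀ n, g n ≠ i) → F i = i := by
    intro i hi
    have h : ¬ ∃ m, g (m + 2) = i := by rintro ⟨m, hm⟩; exact hi _ hm
    have h1 : i ≠ g 1 := fun e => hi 1 e.symm
    simp only [hFdef, dif_neg h, if_neg h1]
  refine ⟨F, ?_, ?_, ?_⟩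
  · -- surjective
    intro j
    by_cases h : ∃ n, g n = j
    · obtain ⟨n, rfl⟩ := h
      cases n with
      | zero => exact ⟨g 0, hF0⟩
      | succ n => exact ⟨g (n + 2), hF2 n⟩
    · exact ⟨j, hFout j (fun n hn => h ⟨n, hn⟩)⟩
  · -- not injective
    intro hinj
    have : F (g 0) = F (g 1) := by rw [hF0, hF1]
    have := hg (hinj this)
    omega
  · -- fiber sums
    intro j
    by_cases hj : ∃ n, g n = j
    · obtain ⟨n, rfl⟩ := hj
      cases n with
      | zero =>
        have hfib : F ⁻¹' {g 0} = {g 0, g 1} := by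
          ext i
          simp only [Set.mem_preimage, Set.mem_singleton_iff, Set.mem_insert_iff]
          constructor
          · intro hFi
            by_cases h : ∃ m, g (m + 2) = i
            · obtain ⟨m, rfl⟩ := h
              rw [hF2 m] at hFi
              have := hg hFi; omega
            · by_cases h1 : i = g 1
              · exact Or.inr h1
              · have : F i = i := by simp only [hFdef, dif_neg h, if_neg h1]
                rw [this] at hFi
                exact Or.inl hFi
          · rintro (rfl | rfl)
            · exact hF0
            · exact hF1
        rw [hfib, sum_pair κ (fun e => by have := hg e; omega), habs]
      | succ n =>
        have hfib : F ⁻¹' {g (n + 1)} = {g (n + 2)} := by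
          ext i
          simp only [Set.mem_preimage, Set.mem_singleton_iff]
          constructor
          · intro hFi
            by_cases h : ∃ m, g (m + 2) = i
            · obtain ⟨m, rfl⟩ := h
              rw [hF2 m] at hFi
              have := hg hFi
              have : m = n := by omega
              rw [this]
            · by_cases h1 : i = g 1
              · rw [h1, hF1] at hFi
                have := hg hFi; omega
              · have : F i = i := by simp only [hFdef, dif_neg h, if_neg h1]
                rw [this] at hFi
                cases n with
                | zero => exact absurd hFi h1
                | succ m => exact absurd ⟨m, hFi.symm⟩ h
          · rintro rfl
            exact hF2 n
        rw [hfib, sum_singleton, hc (n + 1), ← hc n]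
    · have hfib : F ⁻¹' {j} = {j} := by
        ext i
        simp only [Set.mem_preimage, Set.mem_singleton_iff]
        constructor
        · intro hFi
          by_cases h : ∃ m, g (m + 2) = i
          · obtain ⟨m, rfl⟩ := h
            rw [hF2 m] at hFi
            exact absurd ⟨m + 1, hFi⟩ hj
          · by_cases h1 : i = g 1
            · rw [h1, hF1] at hFi
              exact absurd ⟨0, hFi⟩ hj
            · have : F i = i := by simp only [hFdef, dif_neg h, if_neg h1]
              rw [this] at hFi
              exact hFi
        · rintro rfl
          exact hFout _ (fun n hn => hj ⟨n, hn⟩)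
      rw [hfib, sum_singleton]

theorem periodic_of_f2o {I : Type u} (κ : I → Cardinal.{u})
    (hf2o : ∀ c, {i | κ i = c}.Finite) (f : I → I) (hsurj : Function.Surjective f)
    (hmono : ∀ i, κ i ≤ κ (f i)) (i : I) : ∃ t : ℕ, 0 < t ∧ f^[t] i = i := by
  choose sec hsec using hsurj
  set b : ℕ → I := fun k => sec^[k] i with hbdef
  have hb : ∀ k, f (b (k + 1)) = b k := by
    intro k
    have h1 : b (k + 1) = sec (b k) := Function.iterate_succ_apply' sec k i
    rw [h1, hsec]
  have hchain : ∀ k m, f^[m] (b (k + m)) = b k := by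
    intro k m
    induction m with
    | zero => rfl
    | succ m ih =>
      have h1 : k + (m + 1) = (k + m) + 1 := by omega
      rw [h1, Function.iterate_succ_apply, hb (k + m), ih]
  have hmono2 : ∀ k, κ (b (k + 1)) ≤ κ (b k) := fun k => (hb k) ▸ hmono (b (k + 1))
  have hanti : ∀ k l, k ≤ l → κ (b l) ≤ κ (b k) := by
    intro k l hkl
    induction l, hkl using Nat.le_induction with
    | base => exact le_rfl
    | succ l hl ih => exact (hmono2 l).trans ih
  obtain ⟨m, hmmem, hmin⟩ := Cardinal.lt_wf.has_min (Set.range fun k => κ (b k)) ⟨_, ⟨0, rfl⟩⟩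
  obtain ⟨K, hK⟩ := hmmem
  have hconst : ∀ k, K ≤ k → κ (b k) = κ (b K) := by
    intro k hk
    refine le_antisymm (hanti K k hk) ?_
    have h1 : m ≤ κ (b k) := not_lt.1 (hmin _ ⟨k, rfl⟩)
    have h2 : κ (b K) = m := hK
    rw [h2]
    exact h1
  haveI : Finite {i | κ i = κ (b K)} := (hf2o (κ (b K))).to_subtype
  obtain ⟨p, q, hpq, heq⟩ := Finite.exists_ne_map_eq_of_infinite
    (fun k : ℕ => (⟨b (K + k), hconst _ (Nat.le_add_right _ _)⟩ : {i | κ i = κ (b K)}))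
  have hbe : b (K + p) = b (K + q) := congrArg Subtype.val heq
  have key : ∀ p q : ℕ, p < q → b (K + p) = b (K + q) → ∃ t : ℕ, 0 < t ∧ f^[t] i = i := by
    intro p q hlt hbe
    set t := q - p with htdef
    set v := K + q with hvdef
    have hfix : f^[t] (b v) = b v := by
      have h1 : (K + p) + t = v := by omega
      have h2 := hchain (K + p) t
      rw [h1] at h2
      rw [h2, ← hbe]
    have hzi : f^[v] (b v) = i := by
      have h2 := hchain 0 v
      rw [Nat.zero_add] at h2
      exact h2
    refine ⟨t, by omega, ?_⟩
    calc f^[t] i = f^[t] (f^[v] (b v)) := by rw [hzi]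
      _ = f^[t + v] (b v) := (Function.iterate_add_apply f t v _).symm
      _ = f^[v + t] (b v) := by rw [Nat.add_comm]
      _ = f^[v] (f^[t] (b v)) := Function.iterate_add_apply f v t _
      _ = f^[v] (b v) := by rw [hfix]
      _ = i := hzi
  rcases hpq.lt_or_gt with h | h
  · exact key p q h hbe
  · exact key q p h hbe.symm

theorem injective_of_periodic {I : Type u} (f : I → I)
    (hper : ∀ i, ∃ t : ℕ, 0 < t ∧ f^[t] i = i) : Function.Injective f := by
  intro x y hxy
  obtain ⟨a, ha, hax⟩ := hper x
  obtain ⟨c, hc, hcy⟩ := hper y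
  have hx : f^[a * c] x = x := by
    rw [Function.iterate_mul]
    exact Function.iterate_fixed hax c
  have hy : f^[a * c] y = y := by
    rw [Nat.mul_comm, Function.iterate_mul]
    exact Function.iterate_fixed hcy a
  obtain ⟨n, hn⟩ : ∃ n, a * c = n + 1 :=
    ⟨a * c - 1, by have : 0 < a * c := Nat.mul_pos ha hc; omega⟩
  calc x = f^[a * c] x := hx.symm
    _ = f^[n] (f x) := by rw [hn, Function.iterate_succ_apply]
    _ = f^[n] (f y) := by rw [hxy]
    _ = f^[a * c] y := by rw [hn, Function.iterate_succ_apply]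
    _ = y := hy

end Stmt12Aux

/-- For a sequence of nonzero cardinals ⟨κ_i : i ∈ I⟩, the following are
equivalent: (d) the sequence is a reversible sequence of cardinals; (e) it is
finite-to-one, or all κ_i are finite and it is a reversible sequence of naturals. -/
theorem stmt12 {I : Type u} (κ : I → Cardinal.{u}) (h0 : ∀ i, κ i ≠ 0) :
    RevSeqCard κ ↔
      ((∀ c : Cardinal.{u}, {i | κ i = c}.Finite) ∨
        ((∀ i, κ i < Cardinal.aleph0) ∧ RevSeqNat (fun i => (κ i).toNat))) := by
  constructor
  · intro hrev
    by_cases hf2o : ∀ c : Cardinal.{u}, {i | κ i = c}.Finite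
    · exact Or.inl hf2o
    · right
      push_neg at hf2o
      obtain ⟨c, hcinf⟩ := hf2o
      have hcinf : {i | κ i = c}.Infinite := hcinf
      have hfin : ∀ i, κ i < Cardinal.aleph0 := by
        intro i0
        by_contra hbig
        rw [not_lt] at hbig
        by_cases hcale : Cardinal.aleph0 ≤ c
        · let e := Set.Infinite.natEmbedding _ hcinf
          refine absurd hrev (Stmt12Aux.not_rev_of_chain κ (fun n => (e n : I))
            (fun a b h => e.injective (Subtype.ext h)) ?_ ?_)
          · intro n
            rw [(e (n+1)).2, (e 1).2]
          · rw [(e 0).2, (e 1).2]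
            exact Cardinal.add_eq_self hcale
        · rw [not_le] at hcale
          let e := Set.Infinite.natEmbedding _ hcinf
          set g : ℕ → I := fun n => match n with | 0 => i0 | (m+1) => (e m : I) with hgdef
          have hgval : ∀ m : ℕ, κ (g (m+1)) = c := fun m => (e m).2
          have hne : ∀ m : ℕ, i0 ≠ (e m : I) := by
            intro m h
            have : κ i0 = c := h ▸ (e m).2
            rw [this] at hbig
            exact absurd hcale (not_lt.2 hbig)
          refine absurd hrev (Stmt12Aux.not_rev_of_chain κ g ?_ ?_ ?_)
          · intro a b h
            match a, b with
            | 0, 0 => rfl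
            | 0, (m+1) => exact absurd h (hne m)
            | (m+1), 0 => exact absurd h.symm (hne m)
            | (a+1), (b+1) =>
              have : (e a : I) = e b := h
              have := e.injective (Subtype.ext this)
              omega
          · intro n
            rw [hgval n, hgval 0]
          · show κ i0 + κ (g 1) = κ i0
            rw [hgval 0]
            exact Cardinal.add_eq_left hbig (le_of_lt (lt_of_lt_of_le hcale hbig))
      refine ⟨hfin, ?_⟩
      rintro ⟨f, hsurj, hninj, hsum⟩
      apply hrev
      refine ⟨f, hsurj, hninj, ?_⟩
      intro j
      have hpos : ∀ i, (κ i).toNat ≠ 0 := by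
        intro i h
        rw [Cardinal.toNat_eq_zero] at h
        rcases h with h | h
        · exact h0 i h
        · exact absurd (hfin i) (not_lt.2 h)
      have hfib : (f ⁻¹' {j}).Finite := by
        by_contra hinf
        have h1 : ((f ⁻¹' {j}) ∩ Function.support fun i => (κ i).toNat).Infinite := by
          have heq : (f ⁻¹' {j}) ∩ Function.support (fun i => (κ i).toNat) = f ⁻¹' {j} :=
            Set.inter_eq_left.2 (fun i _ => hpos i)
          rw [heq]
          exact hinf
        have h2 := finsum_mem_eq_zero_of_infinite h1
        rw [hsum j] at h2
        exact hpos j h2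
      rw [Stmt12Aux.sum_set_finite κ hfib]
      have h3 := hsum j
      rw [finsum_mem_eq_finite_toFinset_sum _ hfib] at h3
      calc ∑ i ∈ hfib.toFinset, κ i
          = ∑ i ∈ hfib.toFinset, (((κ i).toNat : ℕ) : Cardinal) :=
            Finset.sum_congr rfl (fun i _ =>
              (Cardinal.cast_toNat_of_lt_aleph0 (hfin i)).symm)
        _ = ((∑ i ∈ hfib.toFinset, (κ i).toNat : ℕ) : Cardinal) := (Nat.cast_sum _ _).symm
        _ = (((κ j).toNat : ℕ) : Cardinal) := by rw [h3]
        _ = κ j := Cardinal.cast_toNat_of_lt_aleph0 (hfin j)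
  · rintro (hf2o | ⟨hfin, hnat⟩)
    · rintro ⟨f, hsurj, hninj, hsum⟩
      have hmono : ∀ i, κ i ≤ κ (f i) := by
        intro i
        have h1 := Cardinal.le_sum (fun x : f ⁻¹' {f i} => κ x) ⟨i, rfl⟩
        rw [hsum (f i)] at h1
        exact h1
      exact hninj (Stmt12Aux.injective_of_periodic f
        (fun i => Stmt12Aux.periodic_of_f2o κ hf2o f hsurj hmono i))
    · rintro ⟨f, hsurj, hninj, hsum⟩
      apply hnat
      refine ⟨f, hsurj, hninj, ?_⟩
      intro j
      have hfib : (f ⁻¹' {j}).Finite := by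
        have h2 : (Cardinal.sum fun _ : f ⁻¹' {j} => (1 : Cardinal)) ≤
            Cardinal.sum fun i : f ⁻¹' {j} => κ i :=
          Cardinal.sum_le_sum _ _ (fun i => Cardinal.one_le_iff_ne_zero.2 (h0 i))
        rw [Cardinal.sum_const', mul_one, hsum j] at h2
        exact Cardinal.lt_aleph0_iff_set_finite.1 (h2.trans_lt (hfin j))
      rw [finsum_mem_eq_finite_toFinset_sum _ hfib]
      have h4 := hsum j
      rw [Stmt12Aux.sum_set_finite κ hfib] at h4
      have h5 : ((∑ i ∈ hfib.toFinset, (κ i).toNat : ℕ) : Cardinal) =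
          (((κ j).toNat : ℕ) : Cardinal) := by
        rw [Nat.cast_sum, Cardinal.cast_toNat_of_lt_aleph0 (hfin j), ← h4]
        exact Finset.sum_congr rfl (fun i _ => Cardinal.cast_toNat_of_lt_aleph0 (hfin i))
      exact_mod_cast h5
end

section
/- If ⟨α_i : i ∈ I⟩ is a sequence of nonzero ordinals such that ⟨|α_i| : i ∈ I⟩ is a reversible sequence of cardinals, then the disjoint union poset ⋃_{i∈I} α_i is reversible. -/
universe u

/-!
A monotone map of a disjoint union of chains sends each chain into a single chain, so a
monotone bijection `f` of `Σ i, β i` induces a map `g` on the indices. Bijectivity of `f` makes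
`g` surjective and splits each chain `β j` bijectively into the chains `β i` with `g i = j`, so
`#(β j)` is the sum of the `#(β i)` over the fibre `g ⁻¹' {j}`. Reversibility of the cardinal
sequence then forces `g` to be injective, so `f` preserves the components, and inside a chain
an injective monotone map reflects the order.
-/

open Cardinal

theorem Sigma.fst_eq_of_le_s14 {ι : Type*} {β : ι → Type*} [∀ i, LE (β i)] {a b : Σ i, β i}
    (h : a ≤ b) : a.1 = b.1 :=
  (Sigma.le_def.1 h).1

theorem le_of_map_le_of_le_or_le {P Q : Type*} [Preorder P] [PartialOrder Q] {f : P → Q}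
    (hf : Monotone f) (hinj : Function.Injective f) {x y : P} (hxy : x ≤ y ∨ y ≤ x)
    (h : f x ≤ f y) : x ≤ y := by
  rcases hxy with hxy | hyx
  · exact hxy
  · exact (hinj (le_antisymm h (hf hyx))).le

section

variable {I J : Type*} {β : I → Type*} {γ : J → Type*} [∀ i, LinearOrder (β i)]
  [∀ j, Preorder (γ j)]

theorem Monotone.sigma_fst_map_mk_eq {f : (Σ i, β i) → Σ j, γ j} (hf : Monotone f) (i : I)
    (a b : β i) : (f ⟨i, a⟩).1 = (f ⟨i, b⟩).1 := by
  rcases le_total a b with hab | hba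
  · exact Sigma.fst_eq_of_le_s14 (hf (Sigma.mk_le_mk_iff.2 hab))
  · exact (Sigma.fst_eq_of_le_s14 (hf (Sigma.mk_le_mk_iff.2 hba))).symm

theorem Monotone.exists_sigma_index_map [∀ i, Nonempty (β i)] {f : (Σ i, β i) → Σ j, γ j}
    (hf : Monotone f) : ∃ g : I → J, ∀ i a, (f ⟨i, a⟩).1 = g i :=
  ⟨fun i => (f ⟨i, Classical.arbitrary _⟩).1, fun i _ => hf.sigma_fst_map_mk_eq i _ _⟩

end

theorem Function.Surjective.of_sigma_index_map {I J : Type*} {β : I → Type*} {γ : J → Type*}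
    [∀ j, Nonempty (γ j)] {f : (Σ i, β i) → Σ j, γ j} (hf : Function.Surjective f) {g : I → J}
    (hg : ∀ i a, (f ⟨i, a⟩).1 = g i) : Function.Surjective g := fun j =>
  let ⟨⟨i, a⟩, hfa⟩ := hf ⟨j, Classical.arbitrary _⟩
  ⟨i, by rw [← hg i a, hfa]⟩

theorem Equiv.sum_mk_fiber_sigma_index_map {I J : Type u} {β : I → Type u} {γ : J → Type u}
    (f : (Σ i, β i) ≃ Σ j, γ j) {g : I → J} (hg : ∀ i a, (f ⟨i, a⟩).1 = g i) (j : J) :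
    (sum fun i : g ⁻¹' {j} => #(β i)) = #(γ j) := by
  rw [← mk_sigma]
  refine mk_congr <| (Equiv.subtypeSigmaEquiv β (· ∈ g ⁻¹' {j})).symm.trans <|
    (f.subtypeEquiv ?_).trans (Equiv.sigmaSubtype j)
  rintro ⟨i, a⟩
  rw [hg]
  rfl

theorem reversible_sigma_of_revSeqCard {I : Type u} {β : I → Type u} [∀ i, LinearOrder (β i)]
    [∀ i, Nonempty (β i)] (h : RevSeqCard fun i => #(β i)) : Reversible (Σ i, β i) := by
  intro f hbij hmono x y hxy
  obtain ⟨g, hg⟩ := hmono.exists_sigma_index_map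
  have hginj : Function.Injective g := by
    by_contra hni
    exact h ⟨g, hbij.2.of_sigma_index_map hg, hni,
      (Equiv.ofBijective f hbij).sum_mk_fiber_sigma_index_map hg⟩
  obtain ⟨i, a⟩ := x
  obtain ⟨i', b⟩ := y
  obtain rfl : i = i' := hginj (by rw [← hg i a, ← hg i' b]; exact Sigma.fst_eq_of_le_s14 hxy)
  exact le_of_map_le_of_le_or_le hmono hbij.1
    ((le_total a b).imp Sigma.mk_le_mk_iff.2 Sigma.mk_le_mk_iff.2) hxy

/-- If ⟨α_i : i ∈ I⟩ is a sequence of nonzero ordinals such that the sequence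
of cardinalities ⟨|α_i| : i ∈ I⟩ is a reversible sequence of cardinals, then the disjoint
union poset ⋃_{i∈I} α_i is reversible. -/
theorem stmt14 {I : Type u} (α : I → Ordinal.{u}) (h0 : ∀ i, α i ≠ 0)
    (h : RevSeqCard fun i => (α i).card) :
    Reversible (Σ i, (α i).ToType) := by
  have : ∀ i, Nonempty (α i).ToType := fun i => Ordinal.nonempty_toType_iff.2 (h0 i)
  exact reversible_sigma_of_revSeqCard (by simpa only [mk_toType] using h)
end

section
/- The sequence ⟨ω + n : n ∈ ω⟩ is a reversible sequence of ordinals (the disjoint union poset ⋃_{n∈ω}(ω+n) is reversible), but the constant sequence ⟨ω : n ∈ ω⟩ of cardinals is not a reversible sequence of cardinals. -/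
universe u

/-!
A monotone bijection `f` of `Σ n, ω + n` maps each chain into a single chain, say chain `n` into
chain `g n`, by a strictly monotone map; comparing order types gives `ω + n ≤ ω + g n`, i.e.
`n ≤ g n`. Since `f` is onto, so is `g`, and a surjection of `ℕ` lying above the identity is the
identity. Hence `f` never merges two chains, and being strictly monotone on each chain it reflects
the order. For the cardinals, `n ↦ n - 1` glues the first two copies of `ℵ₀` into one,
as `ℵ₀ + ℵ₀ = ℵ₀`.
-/

theorem eq_id_of_surjective_of_le {α : Type*} [LinearOrder α] [WellFoundedLT α] {g : α → α}
    (hg : Function.Surjective g) (hle : ∀ a, a ≤ g a) : g = id := by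
  suffices ∀ m a, g a = m → a = m from funext fun a => (this _ a rfl).symm
  intro m
  induction m using WellFoundedLT.induction with
  | _ m ih =>
    rintro a rfl
    refine (hle a).eq_or_lt.resolve_right fun hlt => hlt.ne ?_
    obtain ⟨b, hb⟩ := hg a
    obtain rfl := ih a hlt b hb
    exact hb.symm

namespace Sigma

variable {ι : Type*} {α : ι → Type*}

theorem fst_map_mk_eq [∀ i, LinearOrder (α i)] {f : (Σ i, α i) → Σ i, α i} (hf : Monotone f)
    (i : ι) (a b : α i) : (f ⟨i, a⟩).1 = (f ⟨i, b⟩).1 := by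
  rcases le_total a b with h | h
  · exact (le_def.mp (hf (mk_le_mk_iff.mpr h))).1
  · exact (le_def.mp (hf (mk_le_mk_iff.mpr h))).1.symm

theorem exists_strictMono_of_map_mk [∀ i, Preorder (α i)] {f : (Σ i, α i) → Σ i, α i}
    (hf : StrictMono f) {i j : ι} (hij : ∀ a, (f ⟨i, a⟩).1 = j) :
    ∃ h : α i → α j, StrictMono h ∧ ∀ a, f ⟨i, a⟩ = ⟨j, h a⟩ := by
  have key : ∀ a, ∃ b, f ⟨i, a⟩ = ⟨j, b⟩ := fun a => by
    have := hij a
    revert this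
    generalize f ⟨i, a⟩ = p
    rintro rfl
    exact ⟨p.2, rfl⟩
  choose h hh using key
  refine ⟨h, fun a b hab => ?_, hh⟩
  have := hf (mk_lt_mk_iff.mpr hab)
  rwa [hh, hh, mk_lt_mk_iff] at this

theorem le_of_map_le [∀ i, LinearOrder (α i)] {f : (Σ i, α i) → Σ i, α i} (hf : StrictMono f)
    (hfst : ∀ x y, (f x).1 = (f y).1 → x.1 = y.1) {x y : Σ i, α i} (h : f x ≤ f y) : x ≤ y := by
  obtain ⟨i, a⟩ := x
  obtain ⟨j, b⟩ := y
  obtain rfl : i = j := hfst _ _ (le_def.mp h).1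
  exact mk_le_mk_iff.mpr (not_lt.mp fun hba => (hf (mk_lt_mk_iff.mpr hba)).not_ge h)

end Sigma

open Ordinal

theorem Ordinal.le_of_strictMono_toType {o o' : Ordinal} {h : o.ToType → o'.ToType}
    (hh : StrictMono h) : o ≤ o' := by
  rw [← type_toType o, ← type_toType o', type_le_iff']
  exact ⟨(OrderEmbedding.ofStrictMono h hh).ltEmbedding⟩

theorem reversible_sigma_omega0_add_nat :
    Reversible (Σ n : ℕ, (omega0 + (n : Ordinal.{0})).ToType) := by
  intro f hbij hmono x y hxy
  have hf := hmono.strictMono_of_injective hbij.1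
  have hne (n : ℕ) : Nonempty (omega0 + (n : Ordinal.{0})).ToType :=
    nonempty_toType_iff.mpr (omega0_pos.trans_le le_self_add).ne'
  set g : ℕ → ℕ := fun n => (f ⟨n, Classical.choice (hne n)⟩).1
  have hg (n : ℕ) (a) : (f ⟨n, a⟩).1 = g n := Sigma.fst_map_mk_eq hmono n a _
  have hg_le (n : ℕ) : n ≤ g n := by
    obtain ⟨h, hh, -⟩ := Sigma.exists_strictMono_of_map_mk hf (hg n)
    exact_mod_cast (add_le_add_iff_left omega0).mp (le_of_strictMono_toType hh)
  have hg_surj : g.Surjective := fun m => by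
    obtain ⟨⟨n, a⟩, ha⟩ := hbij.2 ⟨m, Classical.choice (hne m)⟩
    exact ⟨n, by rw [← hg n a, ha]⟩
  have hg_id := eq_id_of_surjective_of_le hg_surj hg_le
  refine Sigma.le_of_map_le hf (fun ⟨m, a⟩ ⟨n, b⟩ h => ?_) hxy
  rwa [hg, hg, hg_id] at h

theorem not_revSeqCard_const_aleph0 : ¬ RevSeqCard (fun _ : ℕ => Cardinal.aleph0.{0}) := by
  refine not_not.mpr ⟨fun n => n - 1, fun n => ⟨n + 1, rfl⟩, fun hinj => ?_, fun n => ?_⟩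
  · exact absurd (@hinj 0 1 rfl) (by decide)
  · rw [Cardinal.sum_const', Cardinal.mul_eq_right le_rfl Cardinal.mk_le_aleph0]
    exact Cardinal.mk_ne_zero_iff.mpr ⟨⟨n + 1, rfl⟩⟩

/-- ⟨ω + n : n ∈ ω⟩ is a reversible sequence of ordinals (the disjoint union
poset ⋃_{n∈ω}(ω+n) is reversible), but the constant sequence ⟨ω : n ∈ ω⟩ is not a
reversible sequence of cardinals. -/
theorem stmt15 :
    Reversible (Σ n : ℕ, (Ordinal.omega0 + (n : Ordinal.{0})).ToType) ∧
      ¬ RevSeqCard (fun _ : ℕ => Cardinal.aleph0.{0}) :=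
  ⟨reversible_sigma_omega0_add_nat, not_revSeqCard_const_aleph0⟩
end

section
/- The disjoint union poset P₁ = (⋃_{n∈ω} 1) ∪ ω, i.e., countably many singletons together with one chain of type ω, is not reversible. -/
/-!
The chain absorbs the singleton at index `0`: send it to the bottom of the chain, shift the
chain up by one step and renumber the remaining singletons down by one. This bijection is
monotone, but its inverse is not, since it makes the singleton `0` comparable with the chain.
-/

namespace Sigma

section ChainAbsorbsSingleton

variable {β : Option ℕ → Type*} [∀ n, Unique (β (some n))]

def chainAbsorbsSingleton (e : ℕ ≃ β none) : (Σ o, β o) ≃ Σ o, β o where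
  toFun
    | ⟨none, x⟩ => ⟨none, e (e.symm x + 1)⟩
    | ⟨some 0, _⟩ => ⟨none, e 0⟩
    | ⟨some (n + 1), _⟩ => ⟨some n, default⟩
  invFun
    | ⟨none, x⟩ =>
      match e.symm x with
      | 0 => ⟨some 0, default⟩
      | k + 1 => ⟨none, e k⟩
    | ⟨some n, _⟩ => ⟨some (n + 1), default⟩
  left_inv := by
    rintro ⟨_ | _ | n, x⟩
    · simp
    all_goals simp [Unique.eq_default x]
  right_inv := by
    rintro ⟨_ | n, x⟩
    · obtain ⟨k, rfl⟩ := e.surjective x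
      cases k <;> simp
    · simp [Unique.eq_default x]

variable [∀ o, PartialOrder (β o)]

theorem monotone_chainAbsorbsSingleton (e : ℕ ≃o β none) :
    Monotone (chainAbsorbsSingleton e.toEquiv) := by
  rintro _ _ ⟨_ | _ | n, a, b, hab⟩
  · exact mk_le_mk_iff.2 (e.monotone (Nat.succ_le_succ (e.symm.monotone hab)))
  · exact le_rfl
  · exact le_rfl

theorem not_reversible_of_orderIso_nat (e : ℕ ≃o β none) : ¬ Reversible (Σ o, β o) := by
  intro hrev
  set f := chainAbsorbsSingleton e.toEquiv
  have hle : f ⟨some 0, default⟩ ≤ f ⟨none, e 0⟩ := mk_le_mk_iff.2 (e.monotone (by simp))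
  obtain ⟨⟩ := hrev f f.bijective (monotone_chainAbsorbsSingleton e) _ _ hle

end ChainAbsorbsSingleton

end Sigma

theorem Ordinal.nonempty_orderIso_nat_toType_omega0 :
    Nonempty (ℕ ≃o Ordinal.omega0.{0}.ToType) :=
  have hiso := Ordinal.type_eq.1 (Ordinal.type_nat_lt.trans (Ordinal.type_toType _).symm)
  ⟨OrderIso.ofRelIsoLT hiso.some⟩

/-- The disjoint union poset P₁ = (⋃_{n∈ω} 1) ∪ ω, consisting of countably
many singleton chains (indexed by `some n`) together with one chain of type ω (indexed by
`none`), is not reversible. -/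
theorem stmt16 :
    ¬ Reversible (Σ o : Option ℕ, (cond o.isSome 1 Ordinal.omega0.{0}).ToType) := by
  obtain ⟨e⟩ := Ordinal.nonempty_orderIso_nat_toType_omega0
  have (n : ℕ) : Unique (cond (some n).isSome 1 Ordinal.omega0.{0}).ToType :=
    Ordinal.uniqueToTypeOne
  exact Sigma.not_reversible_of_orderIso_nat e
end

section
/- The disjoint union poset P₂ = (⋃_{n∈ω}(ω+2)) ∪ (⋃_{n∈ω}(ω+4)), consisting of countably many chains of type ω+2 and countably many chains of type ω+4, is not reversible. -/
open Ordinal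

section Condensation

variable {α : Bool → Type*} [∀ b, PartialOrder (α b)]

def condensePairEquiv (g : α true ⊕ α true ≃ α false) :
    (Σ p : Bool × ℕ, α p.1) ≃ Σ p : Bool × ℕ, α p.1 where
  toFun
    | ⟨(true, 0), a⟩ => ⟨(false, 0), g (.inl a)⟩
    | ⟨(true, 1), a⟩ => ⟨(false, 0), g (.inr a)⟩
    | ⟨(true, n + 2), a⟩ => ⟨(true, n), a⟩
    | ⟨(false, n), b⟩ => ⟨(false, n + 1), b⟩
  invFun
    | ⟨(true, n), a⟩ => ⟨(true, n + 2), a⟩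
    | ⟨(false, 0), b⟩ => Sum.elim (⟨(true, 0), ·⟩) (⟨(true, 1), ·⟩) (g.symm b)
    | ⟨(false, n + 1), b⟩ => ⟨(false, n), b⟩
  left_inv
    | ⟨(true, 0), a⟩ => by simp
    | ⟨(true, 1), a⟩ => by simp
    | ⟨(true, _ + 2), _⟩ | ⟨(false, _), _⟩ => rfl
  right_inv
    | ⟨(false, 0), b⟩ => by
      obtain ⟨a | a, rfl⟩ := g.surjective b <;> simp
    | ⟨(true, _), _⟩ | ⟨(false, _ + 1), _⟩ => rfl

theorem monotone_condensePairEquiv {g : α true ⊕ α true ≃ α false} (hg : Monotone g) :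
    Monotone (condensePairEquiv g) := by
  rintro _ _ ⟨⟨b, n⟩, x, y, hxy⟩
  match b, n with
  | true, 0 => exact Sigma.mk_le_mk_iff.2 (hg (Sum.inl_le_inl_iff.2 hxy))
  | true, 1 => exact Sigma.mk_le_mk_iff.2 (hg (Sum.inr_le_inr_iff.2 hxy))
  | true, _ + 2 | false, _ => exact Sigma.mk_le_mk_iff.2 hxy

theorem not_reversible_sigma_of_monotone_equiv (g : α true ⊕ α true ≃ α false)
    (hg : Monotone g) {x y : α true} (hxy : g (.inl x) ≤ g (.inr y)) :
    ¬ Reversible (Σ p : Bool × ℕ, α p.1) := by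
  intro h
  have hle := h _ (condensePairEquiv g).bijective (monotone_condensePairEquiv hg)
    ⟨(true, 0), x⟩ ⟨(true, 1), y⟩ (Sigma.mk_le_mk_iff.2 hxy)
  simp [Sigma.le_def] at hle

end Condensation

def omegaAddInterleave (m n : ℕ) : (ℕ ⊕ₗ Fin m) ⊕ (ℕ ⊕ₗ Fin n) ≃ ℕ ⊕ₗ Fin (m + n) :=
  (Equiv.sumCongr ofLex ofLex).trans <| (Equiv.sumSumSumComm ℕ (Fin m) ℕ (Fin n)).trans <|
    (Equiv.sumCongr Equiv.natSumNatEquivNat finSumFinEquiv).trans toLex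

theorem monotone_omegaAddInterleave (m n : ℕ) : Monotone (omegaAddInterleave m n) := by
  rintro (x | x) (y | y) hxy
  · rcases Sum.inl_le_inl_iff.1 hxy with ⟨hk⟩ | ⟨hi⟩ | _
    · exact Sum.Lex.inl_le_inl_iff.2 (Nat.mul_le_mul_left 2 hk)
    · exact Sum.Lex.inr_le_inr_iff.2 ((Fin.strictMono_castAdd n).monotone hi)
    · exact Sum.Lex.inl_le_inr _ _
  · exact absurd hxy Sum.not_inl_le_inr
  · exact absurd hxy Sum.not_inr_le_inl
  · rcases Sum.inr_le_inr_iff.1 hxy with ⟨hk⟩ | ⟨hi⟩ | _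
    · exact Sum.Lex.inl_le_inl_iff.2 (Nat.add_le_add_right (Nat.mul_le_mul_left 2 hk) 1)
    · exact Sum.Lex.inr_le_inr_iff.2 ((Fin.natAdd_le_natAdd_iff m).2 hi)
    · exact Sum.Lex.inl_le_inr _ _

theorem nonempty_orderIso_toType_omega0_add (c : ℕ) :
    Nonempty ((ω + c : Ordinal.{0}).ToType ≃o ℕ ⊕ₗ Fin c) := by
  have htype : type (Sum.Lex (α := ℕ) (β := Fin c) (· < ·) (· < ·)) =
      typeLT (ω + c : Ordinal).ToType := by
    simp
  obtain ⟨e⟩ := type_eq.1 htype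
  exact ⟨OrderIso.ofRelIsoLT (β := ℕ ⊕ₗ Fin c) e.symm⟩

theorem exists_monotone_equiv_sum_toType_omega0_add (m n : ℕ) :
    ∃ g : (ω + m : Ordinal.{0}).ToType ⊕ (ω + n : Ordinal.{0}).ToType ≃
      (ω + (m + n : ℕ) : Ordinal.{0}).ToType, Monotone g ∧ ∃ x y, g (.inl x) ≤ g (.inr y) := by
  obtain ⟨eₘ⟩ := nonempty_orderIso_toType_omega0_add m
  obtain ⟨eₙ⟩ := nonempty_orderIso_toType_omega0_add n
  obtain ⟨e⟩ := nonempty_orderIso_toType_omega0_add (m + n)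
  refine ⟨(eₘ.sumCongr eₙ).toEquiv.trans ((omegaAddInterleave m n).trans e.symm.toEquiv),
    e.symm.monotone.comp ((monotone_omegaAddInterleave m n).comp (eₘ.sumCongr eₙ).monotone),
    eₘ.symm (toLex (.inl 0)), eₙ.symm (toLex (.inl 0)), ?_⟩
  apply e.symm.monotone
  simp [omegaAddInterleave]

/-- The disjoint union poset P₂ = (⋃_{n∈ω}(ω+2)) ∪ (⋃_{n∈ω}(ω+4)),
consisting of countably many chains of type ω+2 (indexed by (true, n)) and countably many
chains of type ω+4 (indexed by (false, n)), is not reversible. -/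
theorem stmt17 :
    ¬ Reversible (Σ p : Bool × ℕ, (Ordinal.omega0.{0} + cond p.1 2 4).ToType) := by
  obtain ⟨g, hg, x, y, hxy⟩ : ∃ g : (ω + 2 : Ordinal.{0}).ToType ⊕ (ω + 2 : Ordinal.{0}).ToType ≃
      (ω + 4 : Ordinal.{0}).ToType, Monotone g ∧ ∃ x y, g (.inl x) ≤ g (.inr y) := by
    simpa using exists_monotone_equiv_sum_toType_omega0_add 2 2
  exact not_reversible_sigma_of_monotone_equiv
    (α := fun b => (ω + cond b 2 4 : Ordinal.{0}).ToType) g hg hxy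
end

section
/- If ℚ is the rational line and g : L → ℚ is an order embedding of a countable scattered linear order L, then ℚ \ g[L] is a countable dense linear order without endpoints, hence isomorphic to ℚ. -/
/-- A linear order is scattered iff the rational line does not embed into it. -/
def Scattered (L : Type*) [LinearOrder L] : Prop := IsEmpty (ℚ ↪o L)

lemma key {L : Type*} [LinearOrder L] (g : L ↪o ℚ) (S : Set ℚ)
    [DenselyOrdered S] [NoMinOrder S] [NoMaxOrder S] [Nonempty S]
    (hS : S ⊆ Set.range ⇑g) : Nonempty (ℚ ↪o L) := by
  obtain ⟨e⟩ := Order.iso_of_countable_dense ℚ S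
  refine ⟨OrderEmbedding.ofStrictMono (fun q => Classical.choose (hS (e q).2)) ?_⟩
  intro x y hxy
  have hx := Classical.choose_spec (hS (e x).2)
  have hy := Classical.choose_spec (hS (e y).2)
  rw [← g.lt_iff_lt, hx, hy]
  exact_mod_cast e.lt_iff_lt.mpr hxy

/-- If g : L → ℚ is an order embedding of a countable scattered linear order
L into the rational line, then ℚ \ g[L] is a (countable) dense linear order without
endpoints, hence isomorphic to ℚ. -/
theorem stmt18 (L : Type*) [LinearOrder L] [Countable L] (hL : Scattered L)
    (g : L ↪o ℚ) :
    DenselyOrdered ↥(Set.range g)ᶜ ∧ NoMinOrder ↥(Set.range g)ᶜ ∧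
      NoMaxOrder ↥(Set.range g)ᶜ ∧ Countable ↥(Set.range g)ᶜ ∧
      Nonempty (↥(Set.range g)ᶜ ≃o ℚ) := by
  have hdense : DenselyOrdered ↥(Set.range ⇑g)ᶜ := by
    constructor
    rintro ⟨a, ha⟩ ⟨b, hb⟩ hab
    by_contra h
    push_neg at h
    have hsub : Set.Ioo a b ⊆ Set.range ⇑g := by
      intro c ⟨h1, h2⟩
      by_contra hc
      exact absurd (h ⟨c, hc⟩ h1) (by simpa using h2)
    haveI : Nonempty (Set.Ioo a b) := Set.nonempty_Ioo_subtype hab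
    exact hL.elim' (key g (Set.Ioo a b) hsub).some
  have hnomin : NoMinOrder ↥(Set.range ⇑g)ᶜ := by
    constructor
    rintro ⟨a, ha⟩
    by_contra h
    push_neg at h
    have hsub : Set.Iio a ⊆ Set.range ⇑g := by
      intro c hc
      by_contra hc'
      exact absurd (h ⟨c, hc'⟩) (by simpa using hc)
    exact hL.elim' (key g (Set.Iio a) hsub).some
  have hnomax : NoMaxOrder ↥(Set.range ⇑g)ᶜ := by
    constructor
    rintro ⟨a, ha⟩
    by_contra h
    push_neg at h
    have hsub : Set.Ioi a ⊆ Set.range ⇑g := by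
      intro c hc
      by_contra hc'
      exact absurd (h ⟨c, hc'⟩) (by simpa using hc)
    exact hL.elim' (key g (Set.Ioi a) hsub).some
  have hne : Nonempty ↥(Set.range ⇑g)ᶜ := by
    by_contra h
    have hsub : Set.Ioi (0 : ℚ) ⊆ Set.range ⇑g := by
      intro c _
      by_contra hc'
      exact h ⟨⟨c, hc'⟩⟩
    exact hL.elim' (key g (Set.Ioi 0) hsub).some
  refine ⟨hdense, hnomin, hnomax, inferInstance, ?_⟩
  exact Order.iso_of_countable_dense _ _
end
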